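/- arXiv:2204.09936 — 8 statements merged into one kernel-verified Lean document; each statement's English description precedes it below -/
import Mathlib

section
/- Let G be a finite group, N a normal subgroup of G, P a Sylow p-subgroup of G, and x an element of P. If all elements of the coset (N ∩ P)x are conjugate in G, then all p-elements of the coset Nx are conjugate in G. -/
open scoped Pointwise

/-- Key step: a `p`-element of the coset `Nx` is conjugate in `G` to an element
of the coset `(N ⊓ P)x`. -/
theorem aux_conj_to_cap {G : Type*} [Group G] [Fintype G] (p : ℕ) [Fact p.Prime]
    (N : Subgroup G) [N.Normal] (P : Sylow p G) (x : G) (hx : x ∈ P)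
    (y : G) (hy : y ∈ N) (hord : ∃ m : ℕ, orderOf (y * x) = p ^ m) :
    ∃ a ∈ N ⊓ (P : Subgroup G), IsConj (a * x) (y * x) := by
  classical
  set K : Subgroup G := N ⊔ (P : Subgroup G) with hK
  have hPK : (P : Subgroup G) ≤ K := le_sup_right
  have hyxK : y * x ∈ K := K.mul_mem (le_sup_left (a := N) hy) (hPK hx)
  -- the Sylow subgroup of K coming from P
  let PK : Sylow p K := P.subtype hPK
  -- y * x generates a p-subgroup of K
  obtain ⟨m, hm⟩ := hord
  set e : K := ⟨y * x, hyxK⟩ with he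
  have horde : orderOf e = p ^ m := by
    rw [← hm]
    exact Subgroup.orderOf_mk _ _
  have hpgrp : IsPGroup p (Subgroup.zpowers e) :=
    IsPGroup.of_card (by rw [Nat.card_zpowers, horde])
  obtain ⟨S, hS⟩ := hpgrp.exists_le_sylow
  obtain ⟨g, hg⟩ := MulAction.exists_smul_eq K S PK
  have heS : e ∈ S := hS (Subgroup.mem_zpowers e)
  have hmem : g * e * g⁻¹ ∈ ((g • S : Sylow p ↥K) : Subgroup ↥K) := by
    rw [Sylow.smul_def, Sylow.pointwise_smul_def]
    simpa [MulAut.conj_apply] using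
      Subgroup.smul_mem_pointwise_smul e (MulAut.conj g) (S : Subgroup ↥K) heS
  have hgeg : g * e * g⁻¹ ∈ PK := hg ▸ hmem
  -- so (g : G) * (y*x) * (g : G)⁻¹ ∈ P
  have hgP : ((g : G)) * (y * x) * (g : G)⁻¹ ∈ (P : Subgroup G) := by
    have h2 : (g * e * g⁻¹ : K) ∈ Subgroup.subgroupOf (↑P) K := hgeg
    have h3 := Subgroup.mem_subgroupOf.mp h2
    simpa using h3
  -- decompose g = n * q with n ∈ N, q ∈ P
  have hgK : (g : G) ∈ K := g.2
  have : (g : G) ∈ ((N : Set G) * ((P : Subgroup G) : Set G) : Set G) := by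
    rw [← Subgroup.normal_mul N (P : Subgroup G)]
    exact hgK
  obtain ⟨n, hn, q, hq, hnq⟩ := this
  set m' : G := q⁻¹ * n * q with hm'
  have hm'N : m' ∈ N := by
    have := Subgroup.Normal.conj_mem ‹N.Normal› n hn q⁻¹
    simpa [hm', mul_assoc] using this
  -- w = m' * (y*x) * m'⁻¹ ∈ P
  have hw : m' * (y * x) * m'⁻¹ ∈ (P : Subgroup G) := by
    have h1 : m' * (y * x) * m'⁻¹ = q⁻¹ * ((g : G) * (y * x) * (g : G)⁻¹) * q := by
      rw [hm', ← hnq]; group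
    rw [h1]
    exact Subgroup.mul_mem _ (Subgroup.mul_mem _ (Subgroup.inv_mem _ hq) hgP) hq
  set w : G := m' * (y * x) * m'⁻¹ with hwdef
  set a : G := w * x⁻¹ with ha
  have haP : a ∈ (P : Subgroup G) := Subgroup.mul_mem _ hw (Subgroup.inv_mem _ hx)
  have haN : a ∈ N := by
    have : a = m' * y * (x * m'⁻¹ * x⁻¹) := by rw [ha, hwdef]; group
    rw [this]
    exact Subgroup.mul_mem _ (Subgroup.mul_mem _ hm'N hy)
      (by simpa [mul_assoc] using Subgroup.Normal.conj_mem ‹N.Normal› m'⁻¹ (N.inv_mem hm'N) x)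
  refine ⟨a, ⟨haN, haP⟩, ?_⟩
  have : a * x = m' * (y * x) * m'⁻¹ := by rw [ha, hwdef]; group
  rw [this]
  exact (isConj_iff.mpr ⟨m', rfl⟩).symm

/-- Lemma 3.3: if all elements of the coset `(N ⊓ P)x` are conjugate in `G`,
then all `p`-elements of the coset `Nx` are conjugate in `G`. -/
theorem stmt0 {G : Type*} [Group G] [Fintype G] (p : ℕ) [Fact p.Prime]
    (N : Subgroup G) [N.Normal] (P : Sylow p G) (x : G) (hx : x ∈ P)
    (h : ∀ a ∈ N ⊓ (P : Subgroup G), ∀ b ∈ N ⊓ (P : Subgroup G),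
      IsConj (a * x) (b * x)) :
    ∀ y ∈ N, ∀ z ∈ N, (∃ m : ℕ, orderOf (y * x) = p ^ m) →
      (∃ m : ℕ, orderOf (z * x) = p ^ m) → IsConj (y * x) (z * x) := by
  intro y hy z hz hoy hoz
  obtain ⟨a, haNP, hac⟩ := aux_conj_to_cap p N P x hx y hy hoy
  obtain ⟨b, hbNP, hbc⟩ := aux_conj_to_cap p N P x hx z hz hoz
  exact hac.symm.trans ((h a haNP b hbNP).trans hbc)
end

section
/- Let G be a finite group, A a minimal normal p-subgroup of G, and suppose G = A ⋊ D is a semidirect product with x a p-element of D. Then not all elements of the coset Ax are conjugate in G to x. Equivalently: if every element of Ax is conjugate to x in G = A ⋊ D, then A is trivial. -/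
/-- The final step of Lemma 4.1: if `A` is a minimal normal `p`-subgroup of the
finite group `G`, `D` is a complement to `A` in `G`, and `x ∈ D` is a `p`-element
such that every element of the coset `Ax` is conjugate to `x` in `G`,
then `A` is trivial. -/
theorem stmt3 {G : Type*} [Group G] [Fintype G] (p : ℕ) [Fact p.Prime]
    (A D : Subgroup G) [A.Normal] (hA : IsPGroup p A)
    (hmin : ∀ B : Subgroup G, B.Normal → B ≤ A → B = ⊥ ∨ B = A)
    (hcompl : A.IsComplement' D)
    (x : G) (hxD : x ∈ D) (hx : ∃ m : ℕ, orderOf x = p ^ m)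
    (hconj : ∀ a ∈ A, IsConj (a * x) x) :
    A = ⊥ := by
  classical
  by_contra hbot
  have hAnorm : A.Normal := inferInstance
  -- Step 1: the map b ↦ b * (x * b⁻¹ * x⁻¹) from A to A is surjective.
  have hsurj : ∀ a ∈ A, ∃ b ∈ A, b * (x * b⁻¹ * x⁻¹) = a := by
    intro a ha
    obtain ⟨c, hc⟩ := isConj_iff.mp (hconj a ha)
    -- hc : c * (a * x) * c⁻¹ = x, so c⁻¹ * x * c = a * x
    have hgx : c⁻¹ * x * c = a * x := by
      have h := congrArg (fun t => c⁻¹ * t * c) hc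
      simpa [mul_assoc] using h.symm
    obtain ⟨⟨⟨b, hbA⟩, ⟨d, hdD⟩⟩, hg, -⟩ := hcompl.existsUnique c⁻¹
    simp only at hg
    -- hg : b * d = c⁻¹
    set y := d * x * d⁻¹ with hy
    have hyD : y ∈ D := D.mul_mem (D.mul_mem hdD hxD) (D.inv_mem hdD)
    have key : b * y * b⁻¹ = a * x := by
      calc b * y * b⁻¹ = (b * d) * x * (b * d)⁻¹ := by rw [hy]; group
        _ = c⁻¹ * x * (c⁻¹)⁻¹ := by rw [hg]
        _ = a * x := by rw [inv_inv]; exact hgx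
    -- x * y⁻¹ lies in both A and D
    have hwA : x * y⁻¹ ∈ A := by
      have heq : x * y⁻¹ = a⁻¹ * b * (y * b⁻¹ * y⁻¹) := by
        rw [show a⁻¹ * b * (y * b⁻¹ * y⁻¹) = a⁻¹ * (b * y * b⁻¹) * y⁻¹ by group, key]
        group
      rw [heq]
      exact A.mul_mem (A.mul_mem (A.inv_mem ha) hbA)
        (hAnorm.conj_mem _ (A.inv_mem hbA) y)
    have hwD : x * y⁻¹ ∈ D := D.mul_mem hxD (D.inv_mem hyD)
    have hw1 : x * y⁻¹ = 1 := by
      have : x * y⁻¹ ∈ (⊥ : Subgroup G) :=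
        (Subgroup.disjoint_def.mp hcompl.disjoint) hwA hwD
      simpa using this
    have hyx : y = x := (mul_inv_eq_one.mp hw1).symm
    rw [hyx] at key
    refine ⟨b, hbA, ?_⟩
    calc b * (x * b⁻¹ * x⁻¹) = (b * x * b⁻¹) * x⁻¹ := by group
      _ = a := by rw [key]; group
  -- Step 2: hence the map is injective, so conjugation by x on A has no nontrivial fixed point.
  have hnofix : ∀ b ∈ A, x * b * x⁻¹ = b → b = 1 := by
    intro b hbA hfix
    let F : A → A := fun c => ⟨(c : G) * (x * (c : G)⁻¹ * x⁻¹),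
      A.mul_mem c.2 (hAnorm.conj_mem _ (A.inv_mem c.2) x)⟩
    have hFsurj : Function.Surjective F := by
      rintro ⟨a, ha⟩
      obtain ⟨b', hb', hb'eq⟩ := hsurj a ha
      exact ⟨⟨b', hb'⟩, Subtype.ext hb'eq⟩
    have hFinj : Function.Injective F :=
      (Finite.injective_iff_surjective).mpr hFsurj
    have h1 : F ⟨b, hbA⟩ = F ⟨1, A.one_mem⟩ := by
      apply Subtype.ext
      show b * (x * b⁻¹ * x⁻¹) = (1 : G) * (x * (1 : G)⁻¹ * x⁻¹)
      have hinv : x * b⁻¹ * x⁻¹ = b⁻¹ := by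
        rw [show x * b⁻¹ * x⁻¹ = (x * b * x⁻¹)⁻¹ by group, hfix]
      rw [hinv]; group
    have := hFinj h1
    simpa using congrArg (Subtype.val) this
  -- Step 3: but conjugation by x on the nontrivial p-group A, being a p-group action,
  -- has a nontrivial fixed point.
  obtain ⟨m, hm⟩ := hx
  have hξord : orderOf (ConjAct.toConjAct x) = p ^ m := by
    have := orderOf_injective (G := G) (H := ConjAct G)
      ConjAct.toConjAct.toMonoidHom (MulEquiv.injective _) x
    simp only [MulEquiv.coe_toMonoidHom] at this
    rw [this]; exact hm
  have hQ : IsPGroup p (Subgroup.zpowers (ConjAct.toConjAct x)) := by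
    apply IsPGroup.of_card (n := m)
    rw [Nat.card_zpowers, hξord]
  have hpA : p ∣ Nat.card A := by
    rcases hA.card_eq_or_dvd with h1 | h2
    · exact absurd (Subgroup.eq_bot_of_card_eq A (by simpa using h1)) hbot
    · exact h2
  have h1fix : (⟨1, A.one_mem⟩ : A) ∈
      MulAction.fixedPoints (Subgroup.zpowers (ConjAct.toConjAct x)) A := by
    intro g
    apply Subtype.ext
    show (g : ConjAct G) • ((1 : A) : G) = ((1 : A) : G)
    simp
  obtain ⟨⟨b, hbA⟩, hbfix, hbne⟩ :=
    hQ.exists_fixed_point_of_prime_dvd_card_of_fixed_point A hpA h1fix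
  have hb1 : b = 1 := by
    apply hnofix b hbA
    have h2' := congrArg Subtype.val
      (hbfix ⟨ConjAct.toConjAct x, Subgroup.mem_zpowers _⟩)
    have h3 : (ConjAct.toConjAct x) • (b : G) = b := h2'
    rwa [ConjAct.toConjAct_smul] at h3
  exact hbne (Subtype.ext hb1.symm)
end

section
/- Two elements x, y of a profinite group G are conjugate in G if and only if for every open normal subgroup M of G the images Mx and My are conjugate in G/M. -/
/-!
The conjugacy class of `x` is the continuous image of the compact group `G`, hence closed.
If `y` lies outside it, then, the open normal subgroups forming a neighbourhood base at `1`,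
some coset `y M` misses it as well, i.e. the images of `x` and `y` are not conjugate in `G ⧸ M`.
-/

open Set

theorem isClosed_conjugatesOf {G : Type*} [Group G] [TopologicalSpace G] [IsTopologicalGroup G]
    [CompactSpace G] [T2Space G] (x : G) : IsClosed (conjugatesOf x) := by
  have hrange : conjugatesOf x = range fun g : G ↦ g * x * g⁻¹ := by
    ext y
    simp only [conjugatesOf, isConj_iff, mem_ofPred_eq, mem_range]
  rw [hrange]
  exact (isCompact_range (by fun_prop)).isClosed

theorem MonoidHom.image_conjugatesOf_of_surjective {α β : Type*} [Group α] [Group β]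
    {f : α →* β} (hf : Function.Surjective f) (a : α) :
    f '' conjugatesOf a = conjugatesOf (f a) := by
  ext b
  constructor
  · rintro ⟨c, hc, rfl⟩
    exact f.map_isConj hc
  · intro h
    obtain ⟨c, rfl⟩ := isConj_iff.mp h
    obtain ⟨d, rfl⟩ := hf c
    exact ⟨d * a * d⁻¹, isConj_iff.mpr ⟨d, rfl⟩, by simp⟩

theorem exists_openNormalSubgroup_mk_notMem_image {G : Type*} [Group G] [TopologicalSpace G]
    [IsTopologicalGroup G] [CompactSpace G] [TotallyDisconnectedSpace G] {C : Set G}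
    (hC : IsClosed C) {y : G} (hy : y ∉ C) :
    ∃ M : OpenNormalSubgroup G, (y : G ⧸ M.toSubgroup) ∉ QuotientGroup.mk '' C := by
  obtain ⟨M, hM⟩ := ProfiniteGrp.exist_openNormalSubgroup_sub_open_nhds_of_one
    (hC.isOpen_compl.preimage (continuous_const_mul y)) (by simpa using hy)
  refine ⟨M, ?_⟩
  rintro ⟨z, hz, hzy⟩
  have hyz : y⁻¹ * z ∈ M.toSubgroup := QuotientGroup.eq.mp hzy.symm
  exact hM hyz (by simpa using hz)

/-- Lemma 2.1: two elements `x, y` of a profinite group `G` are conjugate in `G`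
if and only if for every open normal subgroup `M` of `G` their images are
conjugate in `G/M`. -/
theorem stmt5 {G : Type*} [Group G] [TopologicalSpace G] [IsTopologicalGroup G]
    [CompactSpace G] [T2Space G] [TotallyDisconnectedSpace G] (x y : G) :
    IsConj x y ↔
      ∀ (M : Subgroup G) [M.Normal], IsOpen (M : Set G) →
        IsConj (x : G ⧸ M) (y : G ⧸ M) := by
  refine ⟨fun h M _ _ ↦ (QuotientGroup.mk' M).map_isConj h, fun h ↦ ?_⟩
  by_contra hxy
  obtain ⟨M, hM⟩ := exists_openNormalSubgroup_mk_notMem_image (isClosed_conjugatesOf x) hxy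
  apply hM
  rw [← QuotientGroup.coe_mk',
    MonoidHom.image_conjugatesOf_of_surjective (QuotientGroup.mk'_surjective _)]
  exact h M M.isOpen'
end

section
/- Let G be a finite group and S a subgroup of G whose conjugates in G generate their direct product M, with C_G(M) = 1. Let Γ be the group of permutations of the set of conjugates of S induced by G, and A the image of N_G(S) in Aut(S). Then there is an injective homomorphism of G into the permutational wreath product A wr Γ under which M maps onto the base group of (Inn S) wr Γ. -/
open Pointwise

/-- The action of a permutation group of `Ω` on the base group `Ω → H` of a
permutational wreath product: `(f^γ)(a) = f(γ⁻¹ a)`. -/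
def permAction (Ω : Type*) (H : Type*) [Group H] :
    Equiv.Perm Ω →* MulAut (Ω → H) where
  toFun σ :=
    { toFun := fun f => f ∘ σ.symm
      invFun := fun f => f ∘ σ
      left_inv := fun f => by ext ω; simp
      right_inv := fun f => by ext ω; simp
      map_mul' := fun f g => rfl }
  map_one' := by ext f ω; rfl
  map_mul' := fun σ τ => by ext f ω; rfl

/-- The permutational wreath product `H wr Sym(Ω)`. -/
abbrev WreathProduct (Ω : Type*) (H : Type*) [Group H] :=
  (Ω → H) ⋊[permAction Ω H] Equiv.Perm Ω

/-- The natural homomorphism from the normalizer `N_G(S)` to `Aut S`. -/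
noncomputable def normalizerToAut {G : Type*} [Group G] (S : Subgroup G) :
    ↥(Subgroup.normalizer (S : Set G)) →* MulAut ↥S :=
  (MulAut.congr (Subgroup.subgroupOfEquivOfLe S.le_normalizer)).toMonoidHom.comp
    MulAut.conjNormal

/-- The set of conjugates of `S` in `G`. -/
def ConjugatesOf {G : Type*} [Group G] (S : Subgroup G) : Type _ :=
  {T : Subgroup G // ∃ g : ConjAct G, g • S = T}

instance {G : Type*} [Group G] (S : Subgroup G) : MulAction G (ConjugatesOf S) where
  smul g T := ⟨ConjAct.toConjAct g • T.1, by
    obtain ⟨h, hh⟩ := T.2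
    exact ⟨ConjAct.toConjAct g * h, by rw [mul_smul, hh]⟩⟩
  one_smul T := Subtype.ext (by
    show ConjAct.toConjAct (1 : G) • T.1 = T.1
    simp)
  mul_smul g h T := Subtype.ext (by
    show ConjAct.toConjAct (g * h) • T.1
        = ConjAct.toConjAct g • ConjAct.toConjAct h • T.1
    rw [map_mul, mul_smul])


namespace Stmt10Aux

variable {G : Type*} [Group G]

lemma mem_toConjAct_smul {H : Subgroup G} {g x : G} :
    x ∈ ConjAct.toConjAct g • H ↔ g⁻¹ * x * g ∈ H := by
  rw [Subgroup.mem_pointwise_smul_iff_inv_smul_mem]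
  simp [ConjAct.smul_def, mul_assoc]

lemma toConjAct_smul_eq_iff {H : Subgroup G} {g : G} :
    ConjAct.toConjAct g • H = H ↔ g ∈ Subgroup.normalizer (H : Set G) := by
  constructor
  · intro h
    rw [Subgroup.mem_normalizer_iff]
    intro x
    rw [SetLike.ext_iff] at h
    have h2 := h (g * x * g⁻¹)
    rw [mem_toConjAct_smul] at h2
    simpa [mul_assoc] using h2
  · intro hg
    ext x
    rw [mem_toConjAct_smul]
    have := Subgroup.mem_normalizer_iff.mp (Subgroup.inv_mem _ hg) x
    simpa [mul_assoc] using this.symm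

end Stmt10Aux

namespace Stmt10Aux
open Pointwise
variable {G : Type*} [Group G]

def conjSet (S : Subgroup G) : Set (Subgroup G) := {T : Subgroup G | ∃ g : ConjAct G, g • S = T}

lemma self_mem_conjSet (S : Subgroup G) : S ∈ conjSet S := ⟨1, one_smul _ _⟩

lemma conjSet_closed {S T : Subgroup G} (hT : T ∈ conjSet S) (g : G) :
    ConjAct.toConjAct g • T ∈ conjSet S := by
  obtain ⟨c, rfl⟩ := hT
  exact ⟨ConjAct.toConjAct g * c, (mul_smul _ _ _)⟩

lemma normA {S : Subgroup G} (hindep : sSupIndep (conjSet S)) {K T : Subgroup G}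
    (hK : K ∈ conjSet S) (hT : T ∈ conjSet S) {g : G} (hg : g ∈ T) :
    ConjAct.toConjAct g • K = K := by
  by_cases hTK : T = K
  · subst hTK
    exact toConjAct_smul_eq_iff.mpr (Subgroup.le_normalizer hg)
  · by_contra hne
    have hL : ConjAct.toConjAct g • K ∈ conjSet S := conjSet_closed hK g
    have hKbot : K = ⊥ := by
      rw [eq_bot_iff]
      intro k hk
      have h1 : g * k * g⁻¹ ∈ ConjAct.toConjAct g • K := by
        rw [mem_toConjAct_smul]
        simpa [mul_assoc] using hk
      set R := sSup (conjSet S \ {K}) with hR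
      have hTR : T ≤ R := le_sSup ⟨hT, hTK⟩
      have hLR : ConjAct.toConjAct g • K ≤ R := le_sSup ⟨hL, hne⟩
      have hkR : k ∈ R := by
        have hkey : k = g⁻¹ * (g * k * g⁻¹) * g := by group
        rw [hkey]
        exact R.mul_mem (R.mul_mem (R.inv_mem (hTR hg)) (hLR h1)) (hTR hg)
      exact (hindep hK).le_bot (Subgroup.mem_inf.mpr ⟨hk, hkR⟩)
    rw [hKbot] at hne
    exact hne (Subgroup.smul_bot _)

lemma commA {S : Subgroup G} (hindep : sSupIndep (conjSet S)) {H K : Subgroup G}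
    (hH : H ∈ conjSet S) (hK : K ∈ conjSet S) (hne : H ≠ K) {h k : G}
    (hh : h ∈ H) (hk : k ∈ K) : Commute h k := by
  have h1 : h * k * h⁻¹ ∈ K := by
    rw [← normA hindep hK hH hh, mem_toConjAct_smul]
    simpa [mul_assoc] using hk
  have h2 : k * h⁻¹ * k⁻¹ ∈ H := by
    rw [← normA hindep hH hK hk, mem_toConjAct_smul]
    simpa [mul_assoc] using H.inv_mem hh
  have hcK : h * k * h⁻¹ * k⁻¹ ∈ K := K.mul_mem h1 (K.inv_mem hk)
  have hcH : h * k * h⁻¹ * k⁻¹ ∈ H := by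
    have := H.mul_mem hh h2
    simpa [mul_assoc] using this
  have hKR : K ≤ sSup (conjSet S \ {H}) := le_sSup ⟨hK, fun e => hne e.symm⟩
  have : h * k * h⁻¹ * k⁻¹ ∈ (⊥ : Subgroup G) :=
    (hindep hH).le_bot (Subgroup.mem_inf.mpr ⟨hcH, hKR hcK⟩)
  rw [Subgroup.mem_bot] at this
  have : h * k = k * h := by
    have e := this
    calc h * k = (h * k * h⁻¹ * k⁻¹) * (k * h) := by group
    _ = k * h := by rw [e]; group
  exact this

end Stmt10Aux

namespace Stmt10Aux

variable {G : Type*} [Group G] (S : Subgroup G)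

lemma normalizerToAut_apply_coe (x : Subgroup.normalizer (S : Set G)) (s : S) :
    ((normalizerToAut S x s : ↥S) : G) = (x : G) * s * (x : G)⁻¹ := by
  simp [normalizerToAut, MulAut.congr, Subgroup.subgroupOfEquivOfLe]

lemma coe_smulC (g : G) (T : ConjugatesOf S) :
    (g • T).1 = ConjAct.toConjAct g • T.1 := rfl

noncomputable def trans (T : ConjugatesOf S) : G := ConjAct.ofConjAct T.2.choose

lemma trans_spec (T : ConjugatesOf S) :
    ConjAct.toConjAct (trans S T) • S = T.1 := by
  have := T.2.choose_spec
  simpa [trans] using this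

noncomputable def cocy (g : G) (T : ConjugatesOf S) : G :=
  (trans S T)⁻¹ * g * trans S (g⁻¹ • T)

lemma cocy_mem (g : G) (T : ConjugatesOf S) : cocy S g T ∈ Subgroup.normalizer (S : Set G) := by
  rw [← toConjAct_smul_eq_iff]
  unfold cocy
  rw [map_mul, map_mul, mul_smul, mul_smul, trans_spec, coe_smulC]
  simp only [map_inv]
  rw [smul_inv_smul, inv_smul_eq_iff, trans_spec]

lemma cocy_one (T : ConjugatesOf S) : cocy S 1 T = 1 := by
  unfold cocy
  rw [inv_one, one_smul, mul_one]
  exact inv_mul_cancel _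

lemma cocy_mul (g h : G) (T : ConjugatesOf S) :
    cocy S (g * h) T = cocy S g T * cocy S h (g⁻¹ • T) := by
  unfold cocy
  rw [mul_inv_rev, mul_smul]
  group

noncomputable def emb : G →* WreathProduct (ConjugatesOf S) (MulAut ↥S) where
  toFun g := ⟨fun T => normalizerToAut S ⟨cocy S g T, cocy_mem S g T⟩,
              MulAction.toPermHom G (ConjugatesOf S) g⟩
  map_one' := by
    ext1
    case _ =>
      show (fun T => normalizerToAut S ⟨cocy S 1 T, cocy_mem S 1 T⟩)
          = (1 : WreathProduct (ConjugatesOf S) (MulAut ↥S)).left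
      funext T
      have h1 : (⟨cocy S 1 T, cocy_mem S 1 T⟩ : Subgroup.normalizer (S : Set G)) = 1 :=
        Subtype.ext (cocy_one S T)
      show normalizerToAut S ⟨cocy S 1 T, cocy_mem S 1 T⟩ = 1
      rw [h1, map_one]
    case _ =>
      show MulAction.toPermHom G (ConjugatesOf S) 1
          = (1 : WreathProduct (ConjugatesOf S) (MulAut ↥S)).right
      rw [map_one]
      rfl
  map_mul' := by
    intro g h
    have hr : MulAction.toPermHom G (ConjugatesOf S) (g * h) =
        MulAction.toPermHom G (ConjugatesOf S) g * MulAction.toPermHom G (ConjugatesOf S) h :=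
      map_mul _ _ _
    ext1
    case _ =>
      show (fun T => normalizerToAut S ⟨cocy S (g*h) T, cocy_mem S (g*h) T⟩) = _
      funext T
      show normalizerToAut S ⟨cocy S (g*h) T, _⟩
        = normalizerToAut S ⟨cocy S g T, _⟩ *
          normalizerToAut S ⟨cocy S h ((MulAction.toPermHom G (ConjugatesOf S) g).symm T), _⟩
      have hsymm : (MulAction.toPermHom G (ConjugatesOf S) g).symm T = g⁻¹ • T := rfl
      rw [hsymm, ← map_mul]
      congr 1
      exact Subtype.ext (cocy_mul S g h T)
    case _ => exact hr

end Stmt10Aux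

namespace Stmt10Aux
variable {G : Type*} [Group G]

lemma conj_comm_helper {a g x : G}
    (h : (a⁻¹*g*a) * (a⁻¹*x*a) * (a⁻¹*g*a)⁻¹ = a⁻¹*x*a) : g * x = x * g := by
  have h2 : (a⁻¹*g*a) * (a⁻¹*x*a) = (a⁻¹*x*a) * (a⁻¹*g*a) :=
    mul_inv_eq_iff_eq_mul.mp h
  have h1 : a⁻¹ * (g*x) * a = a⁻¹ * (x*g) * a := by
    calc a⁻¹*(g*x)*a = (a⁻¹*g*a) * (a⁻¹*x*a) := by group
    _ = (a⁻¹*x*a) * (a⁻¹*g*a) := h2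
    _ = a⁻¹*(x*g)*a := by group
  exact mul_left_cancel (mul_right_cancel h1)

lemma sSup_conjSet_normal (S : Subgroup G) : (sSup (conjSet S)).Normal := by
  constructor
  intro n hn g
  have key : ConjAct.toConjAct g • sSup (conjSet S) ≤ sSup (conjSet S) := by
    rw [Subgroup.pointwise_smul_subset_iff]
    apply sSup_le
    intro T hT
    have h1 : ConjAct.toConjAct g • T ≤ sSup (conjSet S) := le_sSup (conjSet_closed hT g)
    have h2 := (Subgroup.pointwise_smul_le_pointwise_smul_iff
      (a := (ConjAct.toConjAct g)⁻¹)).mpr h1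
    rwa [inv_smul_smul] at h2
  apply key
  rw [mem_toConjAct_smul]
  simpa [mul_assoc] using hn

lemma sSup_conjSet (S : Subgroup G) :
    sSup (conjSet S) = Subgroup.normalClosure (S : Set G) := by
  apply le_antisymm
  · apply sSup_le
    rintro T ⟨c, rfl⟩
    intro x hx
    obtain ⟨y, hy, rfl⟩ := (Subgroup.mem_smul_pointwise_iff_exists _ _ _).mp hx
    rw [ConjAct.smul_def]
    exact Subgroup.normalClosure_normal.conj_mem _
      (Subgroup.subset_normalClosure hy) _
  · have : (sSup (conjSet S)).Normal := sSup_conjSet_normal S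
    exact Subgroup.normalClosure_le_normal
      ((le_sSup (self_mem_conjSet S)) : S ≤ sSup (conjSet S))

end Stmt10Aux



open Stmt10Aux

/-- Lemma 3.5: let `G` be a finite group and `S` a subgroup whose conjugates
generate their direct product `M`, with trivial centralizer `C_G(M) = 1`.
Let `Γ` be the group of permutations of the conjugates of `S` induced by `G`
and `A` the image of `N_G(S)` in `Aut S`.  Then `G` embeds in the permutational
wreath product `A wr Γ` with `M` mapping onto the base group of `(Inn S) wr Γ`. -/
theorem stmt10 {G : Type*} [Group G] [Fintype G] (S : Subgroup G)
    (M : Subgroup G) (hM : M = Subgroup.normalClosure (S : Set G))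
    (hindep : sSupIndep
      {T : Subgroup G | ∃ g : ConjAct G, g • S = T})
    (hcent : Subgroup.centralizer (M : Set G) = ⊥) :
    ∃ e : G →* WreathProduct (ConjugatesOf S) (MulAut ↥S),
      Function.Injective e ∧
      (∀ g : G, (e g).right ∈ (MulAction.toPermHom G (ConjugatesOf S)).range ∧
        ∀ ω : ConjugatesOf S, (e g).left ω ∈ (normalizerToAut S).range) ∧
      (e '' (M : Set G) = {w : WreathProduct (ConjugatesOf S) (MulAut ↥S) |
        w.right = 1 ∧ ∀ ω : ConjugatesOf S,
          w.left ω ∈ (MulAut.conj : ↥S →* MulAut ↥S).range}) := by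
  classical
  have hindep' : sSupIndep (conjSet S) := hindep
  have hMsup : M = sSup (conjSet S) := by rw [hM, sSup_conjSet]
  have hMnormal : M.Normal := hM ▸ Subgroup.normalClosure_normal
  have hmem_le : ∀ T ∈ conjSet S, T ≤ M := fun T hT => hMsup ▸ le_sSup hT
  have hnorm : ∀ K ∈ conjSet S, M ≤ Subgroup.normalizer (K : Set G) := by
    intro K hK
    rw [hMsup]
    apply sSup_le
    intro T hT t ht
    exact toConjAct_smul_eq_iff.mp (normA hindep' hK hT ht)
  have hfix : ∀ m ∈ M, ∀ T : ConjugatesOf S, m • T = T := by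
    intro m hm T
    exact Subtype.ext (by
      rw [coe_smulC]
      exact toConjAct_smul_eq_iff.mpr (hnorm _ T.2 hm))
  -- the Q property
  have hQ : ∀ x ∈ M, ∃ s : S, ∀ y : S, x * (y:G) * x⁻¹ = (s:G) * y * (s:G)⁻¹ := by
    let Q : Subgroup G :=
      { carrier := {x | ∃ s : S, ∀ y : S, x * (y:G) * x⁻¹ = (s:G) * y * (s:G)⁻¹}
        one_mem' := ⟨1, fun y => by simp⟩
        mul_mem' := by
          rintro a b ⟨s, hs⟩ ⟨t, ht⟩
          refine ⟨s*t, fun y => ?_⟩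
          have h1 := ht y
          have h2 := hs ⟨(t:G)*y*(t:G)⁻¹,
            mul_mem (mul_mem t.2 y.2) (inv_mem t.2)⟩
          simp only [Subgroup.coe_mk] at h2
          calc (a*b) * (y:G) * (a*b)⁻¹ = a * (b*y*b⁻¹) * a⁻¹ := by group
          _ = a * ((t:G)*y*(t:G)⁻¹) * a⁻¹ := by rw [h1]
          _ = (s:G) * ((t:G)*y*(t:G)⁻¹) * (s:G)⁻¹ := h2
          _ = ((s*t : S):G) * y * ((s*t : S):G)⁻¹ := by push_cast; group
        inv_mem' := by
          rintro a ⟨s, hs⟩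
          refine ⟨s⁻¹, fun y => ?_⟩
          have h2 := hs ⟨(s:G)⁻¹*y*(s:G),
            mul_mem (mul_mem (inv_mem s.2) y.2) s.2⟩
          simp only [Subgroup.coe_mk] at h2
          have h3 : a * ((s:G)⁻¹*y*(s:G)) * a⁻¹ = (y:G) := by rw [h2]; group
          have h4 : a⁻¹ * (a * ((s:G)⁻¹*y*(s:G)) * a⁻¹) * a = a⁻¹ * (y:G) * a :=
            congrArg (fun w => a⁻¹ * w * a) h3
          calc a⁻¹ * (y:G) * a⁻¹⁻¹
              = a⁻¹ * (a * ((s:G)⁻¹*y*(s:G)) * a⁻¹) * a := by rw [h4]; group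
          _ = ((s⁻¹ : S):G) * y * ((s⁻¹ : S):G)⁻¹ := by push_cast; group }
    have hle : M ≤ Q := by
      rw [hMsup]
      apply sSup_le
      intro T hT
      by_cases hTS : T = S
      · subst hTS
        intro x hxS
        exact ⟨⟨x, hxS⟩, fun y => rfl⟩
      · intro x hxT
        refine ⟨1, fun y => ?_⟩
        have hc : x * (y:G) = y * x := commA hindep' hT (self_mem_conjSet S) hTS hxT y.2
        show x * (y:G) * x⁻¹ = (1:G) * y * (1:G)⁻¹
        rw [hc, mul_assoc, mul_inv_cancel, mul_one]
        simp
    exact fun x hx => hle hx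
  refine ⟨emb S, ?_, ?_, ?_⟩
  · -- injectivity
    rw [injective_iff_map_eq_one]
    intro g hg
    have hright : MulAction.toPermHom G (ConjugatesOf S) g = 1 := by
      have := congrArg SemidirectProduct.right hg
      exact this
    have hleft : ∀ T : ConjugatesOf S,
        normalizerToAut S ⟨cocy S g T, cocy_mem S g T⟩ = 1 := by
      intro T
      have h := congrArg SemidirectProduct.left hg
      have := congrFun h T
      exact this
    have hfixg : ∀ T : ConjugatesOf S, g • T = T := fun T => Equiv.ext_iff.mp hright T
    have hcentral : ∀ T : ConjugatesOf S, T.1 ≤ Subgroup.centralizer {g} := by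
      intro T x hx
      have hxT : (trans S T)⁻¹ * x * trans S T ∈ S := by
        rw [← mem_toConjAct_smul, trans_spec]
        exact hx
      have hTfix : g⁻¹ • T = T := by
        conv_lhs => rw [← hfixg T]
        rw [inv_smul_smul]
      have hc : cocy S g T = (trans S T)⁻¹ * g * trans S T := by
        unfold cocy
        rw [hTfix]
      have h2 := MulEquiv.ext_iff.mp (hleft T) ⟨_, hxT⟩
      have h3 := congrArg (Subtype.val) h2
      rw [normalizerToAut_apply_coe] at h3
      simp only [Subgroup.coe_mk] at h3
      rw [hc] at h3
      have h4 : g * x = x * g := conj_comm_helper h3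
      rw [Subgroup.mem_centralizer_iff]
      intro h hh
      rw [Set.mem_singleton_iff] at hh
      subst hh
      exact h4
    have hM_le_cent : M ≤ Subgroup.centralizer {g} := by
      rw [hMsup]
      exact sSup_le fun T hT => hcentral ⟨T, hT⟩
    have hg_cent : g ∈ Subgroup.centralizer (M : Set G) := by
      rw [Subgroup.mem_centralizer_iff]
      intro m hm
      have := Subgroup.mem_centralizer_iff.mp (hM_le_cent hm) g (Set.mem_singleton g)
      exact this.symm
    rw [hcent] at hg_cent
    exact Subgroup.mem_bot.mp hg_cent
  · intro g
    exact ⟨⟨g, rfl⟩, fun ω => ⟨⟨cocy S g ω, cocy_mem S g ω⟩, rfl⟩⟩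
  · -- image of M
    apply Set.eq_of_subset_of_subset
    · rintro w ⟨m, hm, rfl⟩
      rw [SetLike.mem_coe] at hm
      constructor
      · exact Equiv.ext fun T => hfix m hm T
      · intro T
        have hfixinv : m⁻¹ • T = T := hfix _ (M.inv_mem hm) T
        have hcocy_eq : cocy S m T = (trans S T)⁻¹ * m * trans S T := by
          unfold cocy
          rw [hfixinv]
        have hcocyM : cocy S m T ∈ M := by
          rw [hcocy_eq]
          simpa using hMnormal.conj_mem m hm (trans S T)⁻¹
        obtain ⟨s, hs⟩ := hQ (cocy S m T) hcocyM
        refine ⟨s, ?_⟩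
        show MulAut.conj s = normalizerToAut S ⟨cocy S m T, cocy_mem S m T⟩
        symm
        apply MulEquiv.ext
        intro y
        apply Subtype.ext
        rw [normalizerToAut_apply_coe]
        simp only [MulAut.conj_apply]
        push_cast
        exact hs y
    · rintro w ⟨hw1, hw2⟩
      choose s hs using hw2
      have : Finite (ConjugatesOf S) := by
        unfold ConjugatesOf
        infer_instance
      have : Fintype (ConjugatesOf S) := Fintype.ofFinite _
      set f : ConjugatesOf S → G := fun T => trans S T * (s T : G) * (trans S T)⁻¹ with hf
      have hfT : ∀ T : ConjugatesOf S, f T ∈ T.1 := by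
        intro T
        rw [← trans_spec, mem_toConjAct_smul]
        simpa [hf, mul_assoc] using (s T).2
      have comm : (↑(Finset.univ : Finset (ConjugatesOf S)) : Set (ConjugatesOf S)).Pairwise
          (Function.onFun Commute f) := by
        intro T _ U _ hTU
        exact commA hindep' T.2 U.2 (fun h => hTU (Subtype.ext h)) (hfT T) (hfT U)
      set m := Finset.univ.noncommProd f comm with hmdef
      have hmM : m ∈ M :=
        Subgroup.noncommProd_mem M comm (fun T _ => hmem_le T.1 T.2 (hfT T))
      refine ⟨m, SetLike.mem_coe.mpr hmM, ?_⟩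
      have hkey : ∀ T : ConjugatesOf S, ∀ z ∈ T.1, m * z * m⁻¹ = f T * z * (f T)⁻¹ := by
        intro T z hz
        have hsplit := Finset.noncommProd_erase_mul Finset.univ (Finset.mem_univ T) f comm
        set r := (Finset.univ.erase T).noncommProd f
          (comm.mono (Finset.coe_subset.2 (Finset.erase_subset _ _))) with hrdef
        have hr_cent : r ∈ Subgroup.centralizer (T.1 : Set G) := by
          apply Subgroup.noncommProd_mem
          intro U hU
          rw [Subgroup.mem_centralizer_iff]
          intro z' hz'
          exact commA hindep' T.2 U.2
            (fun h => (Finset.ne_of_mem_erase hU) (Subtype.ext h.symm)) hz' (hfT U)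
        have hzT : f T * z * (f T)⁻¹ ∈ T.1 :=
          mul_mem (mul_mem (hfT T) hz) (inv_mem (hfT T))
        have hcomm : (f T * z * (f T)⁻¹) * r = r * (f T * z * (f T)⁻¹) :=
          Subgroup.mem_centralizer_iff.mp hr_cent _ hzT
        calc m * z * m⁻¹ = (r * f T) * z * (r * f T)⁻¹ := by rw [hsplit]
        _ = r * (f T * z * (f T)⁻¹) * r⁻¹ := by group
        _ = (f T * z * (f T)⁻¹) * r * r⁻¹ := by rw [hcomm]
        _ = f T * z * (f T)⁻¹ := by group
      have hright : (emb S m).right = w.right := by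
        rw [hw1]
        exact Equiv.ext fun T => hfix m hmM T
      have hleft : (emb S m).left = w.left := by
        funext T
        rw [← hs T]
        show normalizerToAut S ⟨cocy S m T, cocy_mem S m T⟩ = MulAut.conj (s T)
        have hfixinv : m⁻¹ • T = T := hfix _ (M.inv_mem hmM) T
        have hcocy_eq : cocy S m T = (trans S T)⁻¹ * m * trans S T := by
          unfold cocy
          rw [hfixinv]
        apply MulEquiv.ext
        intro y
        apply Subtype.ext
        rw [normalizerToAut_apply_coe]
        simp only [Subgroup.coe_mk, MulAut.conj_apply]
        push_cast
        have hzT : trans S T * (y:G) * (trans S T)⁻¹ ∈ T.1 := by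
          rw [← trans_spec, mem_toConjAct_smul]
          simpa [mul_assoc] using y.2
        have hk := hkey T _ hzT
        calc cocy S m T * (y:G) * (cocy S m T)⁻¹
            = (trans S T)⁻¹ * (m * (trans S T * (y:G) * (trans S T)⁻¹) * m⁻¹) * trans S T := by
              rw [hcocy_eq]; group
        _ = (trans S T)⁻¹ * (f T * (trans S T * (y:G) * (trans S T)⁻¹) * (f T)⁻¹) * trans S T := by
              rw [hk]
        _ = (s T : G) * (y:G) * (s T : G)⁻¹ := by rw [hf]; group
      exact SemidirectProduct.ext hleft hright
end

section
/- Let S be a finite group with trivial center, naturally embedded in A = Aut(S), and let S ≤ G ≤ A. Let p be a prime dividing |S| and t a p-element of and suppose all p-elements of the coset St are conjugate to t in G and [G, t] ≤ S and G/S is a p-group generated by the images of p-elements. Then, with k defined as |C_S(t)| divided by the number of p'-elements of C_S(t), one has |G| = k·|S·C_G(t)| and k is a power of p. -/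
open Pointwise
open scoped commutatorElement

private lemma pp_exists {M : Type*} [Group M] [Finite M] {p : ℕ} (hp : p.Prime) (u : M) :
    ∃ v w : M, v * w = u ∧ Commute v w ∧ (∃ k : ℕ, orderOf v = p ^ k) ∧
      ¬ p ∣ orderOf w ∧ v ∈ Subgroup.zpowers u ∧ w ∈ Subgroup.zpowers u := by
  set o := orderOf u with ho
  have ho0 : o ≠ 0 := (orderOf_pos u).ne'
  set α := o.factorization p with hα
  set q := o / p ^ α with hq
  have hoq : p ^ α * q = o := Nat.ordProj_mul_ordCompl_eq_self o p
  have hpq : ¬ p ∣ q := Nat.not_dvd_ordCompl hp ho0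
  have hcop : Nat.Coprime q (p ^ α) :=
    (Nat.Coprime.pow_right α ((hp.coprime_iff_not_dvd.mpr hpq).symm))
  set c := q ^ ((p ^ α).totient - 1) with hc
  have htot : 1 ≤ (p ^ α).totient := Nat.totient_pos.mpr (pow_pos hp.pos α)
  have hqc : q * c ≡ 1 [MOD p ^ α] := by
    have h1 : q * c = q ^ (p ^ α).totient := by
      rw [hc, ← pow_succ']
      congr 1
      omega
    rw [h1]
    exact Nat.ModEq.pow_totient hcop
  refine ⟨u ^ (q * c), u * (u ^ (q * c))⁻¹, ?_, ?_, ?_, ?_, ?_, ?_⟩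
  · have : Commute (u ^ (q * c)) u := (Commute.refl u).pow_left _
    rw [← mul_assoc, this.eq, mul_assoc, mul_inv_cancel, mul_one]
  · exact Commute.mul_right ((Commute.refl u).pow_left _) (Commute.refl _).inv_right
  · have hpow : (u ^ (q * c)) ^ (p ^ α) = 1 := by
      rw [← pow_mul]
      have : q * c * p ^ α = o * c := by rw [← hoq]; ring
      rw [this, pow_mul, pow_orderOf_eq_one, one_pow]
    obtain ⟨k, _, hk⟩ := (Nat.dvd_prime_pow hp).mp (orderOf_dvd_of_pow_eq_one hpow)
    exact ⟨k, hk⟩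
  · have hw : u * (u ^ (q * c))⁻¹ = u ^ ((1 : ℤ) - (q * c : ℕ)) := by
      rw [zpow_sub, zpow_one, zpow_natCast]
    have hdvd : orderOf (u * (u ^ (q * c))⁻¹) ∣ q := by
      apply orderOf_dvd_of_pow_eq_one
      rw [hw, ← zpow_natCast (u ^ ((1 : ℤ) - (q * c : ℕ))), ← zpow_mul]
      rw [← orderOf_dvd_iff_zpow_eq_one]
      have h1 : (((p ^ α : ℕ)) : ℤ) ∣ 1 - (q * c : ℕ) := Nat.ModEq.dvd hqc
      have h2 : (o : ℤ) ∣ (1 - (q * c : ℕ)) * q := by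
        rw [← hoq]
        push_cast at h1 ⊢
        exact mul_dvd_mul h1 dvd_rfl
      exact h2
    exact fun h => hpq (h.trans hdvd)
  · exact Subgroup.pow_mem _ (Subgroup.mem_zpowers u) _
  · exact Subgroup.mul_mem _ (Subgroup.mem_zpowers u)
      (Subgroup.inv_mem _ (Subgroup.pow_mem _ (Subgroup.mem_zpowers u) _))


private lemma pp_canon {M : Type*} [Group M] [Finite M] {p : ℕ} (hp : p.Prime)
    {u v w : M} (h : v * w = u) (hc : Commute v w)
    (hv : ∃ k : ℕ, orderOf v = p ^ k) (hw : ¬ p ∣ orderOf w) :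
    v = u ^ ((orderOf u / p ^ (orderOf u).factorization p) *
      (orderOf u / p ^ (orderOf u).factorization p) ^
        ((p ^ (orderOf u).factorization p).totient - 1)) := by
  obtain ⟨a, ha⟩ := hv
  set o := orderOf u with ho
  have ho0 : o ≠ 0 := (orderOf_pos u).ne'
  set α := o.factorization p with hα
  set q := o / p ^ α with hq
  have hoq : p ^ α * q = o := Nat.ordProj_mul_ordCompl_eq_self o p
  have hpq : ¬ p ∣ q := Nat.not_dvd_ordCompl hp ho0
  set c := q ^ ((p ^ α).totient - 1) with hc'
  have htot : 1 ≤ (p ^ α).totient := Nat.totient_pos.mpr (pow_pos hp.pos α)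
  have hcop : Nat.Coprime q (p ^ α) :=
    (Nat.Coprime.pow_right α ((hp.coprime_iff_not_dvd.mpr hpq).symm))
  have hqc : q * c ≡ 1 [MOD p ^ α] := by
    have h1 : q * c = q ^ (p ^ α).totient := by
      rw [hc', ← pow_succ']; congr 1; omega
    rw [h1]; exact Nat.ModEq.pow_totient hcop
  -- orders
  have hcovw : Nat.Coprime (orderOf v) (orderOf w) := by
    rw [ha]
    exact Nat.Coprime.pow_left a (hp.coprime_iff_not_dvd.mpr hw)
  have horder : o = orderOf v * orderOf w := by
    rw [ho, ← h, hc.orderOf_mul_eq_mul_orderOf_of_coprime hcovw]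
  have hvdvd : orderOf v ∣ p ^ α := by
    have h1 : orderOf v ∣ p ^ α * q := by rw [hoq, horder]; exact dvd_mul_right _ _
    have h2 : Nat.Coprime (orderOf v) q := by
      rw [ha]; exact Nat.Coprime.pow_left a (hp.coprime_iff_not_dvd.mpr hpq)
    exact (Nat.Coprime.dvd_of_dvd_mul_right h2 h1)
  have hwdvd : orderOf w ∣ q := by
    have h1 : orderOf w ∣ p ^ α * q := by
      rw [hoq, horder]; exact dvd_mul_left _ _
    have h2 : Nat.Coprime (orderOf w) (p ^ α) :=
      Nat.Coprime.pow_right α ((hp.coprime_iff_not_dvd.mpr hw).symm)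
    exact (Nat.Coprime.dvd_of_dvd_mul_left h2 h1)
  -- compute
  have key : u ^ (q * c) = v := by
    rw [← h, hc.mul_pow]
    have hw1 : w ^ (q * c) = 1 := by
      rw [pow_mul]
      have : w ^ q = 1 := orderOf_dvd_iff_pow_eq_one.mp hwdvd
      rw [this, one_pow]
    have hv1 : v ^ (q * c) = v := by
      conv_rhs => rw [← pow_one v]
      rw [pow_eq_pow_iff_modEq]
      exact Nat.ModEq.of_dvd hvdvd hqc
    rw [hw1, hv1, mul_one]
  exact key.symm


private lemma pp_unique {M : Type*} [Group M] [Finite M] {p : ℕ} (hp : p.Prime)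
    {u v w v' w' : M} (h : v * w = u) (hc : Commute v w)
    (hv : ∃ k : ℕ, orderOf v = p ^ k) (hw : ¬ p ∣ orderOf w)
    (h' : v' * w' = u) (hc' : Commute v' w')
    (hv' : ∃ k : ℕ, orderOf v' = p ^ k) (hw' : ¬ p ∣ orderOf w') :
    v = v' ∧ w = w' := by
  have e1 := pp_canon hp h hc hv hw
  have e2 := pp_canon hp h' hc' hv' hw'
  have hvv : v = v' := e1.trans e2.symm
  refine ⟨hvv, ?_⟩
  subst hvv
  exact mul_left_cancel (h.trans h'.symm)



/-- The counting step of Lemma 3.1: let `S` be a finite group with trivial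
centre, identified with `Inn S ≤ Aut S`, and `S ≤ G ≤ Aut S`.  Let `p` be a
prime dividing `|S|` and `t ∈ G` a `p`-element with all `p`-elements of `St`
conjugate to `t` in `G`, `[G, t] ≤ S`, and `G/S` a `p`-group generated by the
images of `p`-elements.  Setting `k = |C_S(t)|` divided by the number of
`p'`-elements of `C_S(t)`, one has `|G| = k·|S·C_G(t)|` and `k` is a power
of `p`. -/
theorem stmt11 {S : Type*} [Group S] [Fintype S] (p : ℕ) [Fact p.Prime]
    (hcenter : Subgroup.center S = ⊥) (hpS : p ∣ Nat.card S)
    (G : Subgroup (MulAut S))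
    (hInn : (MulAut.conj : S →* MulAut S).range ≤ G)
    (t : MulAut S) (htG : t ∈ G) (ht : ∃ k : ℕ, orderOf t = p ^ k)
    (hconj : ∀ u : MulAut S, u * t⁻¹ ∈ (MulAut.conj : S →* MulAut S).range →
      (∃ k : ℕ, orderOf u = p ^ k) → ∃ g ∈ G, g⁻¹ * u * g = t)
    (hcomm : ∀ g ∈ G, ⁅g, t⁆ ∈ (MulAut.conj : S →* MulAut S).range)
    (hpquot : ∃ k : ℕ,
      (((MulAut.conj : S →* MulAut S).range.subgroupOf G)).index = p ^ k)
    (hgen : (MulAut.conj : S →* MulAut S).range ⊔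
      Subgroup.closure {g : MulAut S | g ∈ G ∧ ∃ k : ℕ, orderOf g = p ^ k} = G) :
    Nat.card G =
      (Nat.card {s : S // t s = s} /
        Nat.card {s : S // t s = s ∧ ¬ p ∣ orderOf s}) *
      Nat.card ↥(((MulAut.conj : S →* MulAut S).range : Set (MulAut S)) *
        ((Subgroup.centralizer {t} ⊓ G : Subgroup (MulAut S)) : Set (MulAut S)))
    ∧ ∃ j : ℕ, Nat.card {s : S // t s = s} /
        Nat.card {s : S // t s = s ∧ ¬ p ∣ orderOf s} = p ^ j := by
  have hp : p.Prime := Fact.out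
  haveI hfin : Finite (MulAut S) := Finite.of_injective
    (fun (f : MulAut S) => (f : S → S)) DFunLike.coe_injective
  obtain ⟨k, hk⟩ := hpquot
  set I := (MulAut.conj : S →* MulAut S).range with hI
  set C := Subgroup.centralizer {t} ⊓ G with hC
  set cS := Nat.card {s : S // t s = s} with hcS
  set m := Nat.card {s : S // t s = s ∧ ¬ p ∣ orderOf s} with hm
  set P : Set (MulAut S) := {u | u * t⁻¹ ∈ I ∧ ∃ k : ℕ, orderOf u = p ^ k} with hP
  -- preliminaries
  have hinj : Function.Injective (MulAut.conj : S →* MulAut S) := by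
    rw [injective_iff_map_eq_one]
    intro a ha
    have key : ∀ x : S, a * x = x * a := by
      intro x
      have hx := DFunLike.congr_fun ha x
      simp only [MulAut.conj_apply, MulAut.one_apply] at hx
      calc a * x = (a * x * a⁻¹) * a := by group
        _ = x * a := by rw [hx]
    have : a ∈ Subgroup.center S := Subgroup.mem_center_iff.mpr (fun g => (key g).symm)
    rw [hcenter, Subgroup.mem_bot] at this
    exact this
  have hcc : ∀ (g : MulAut S) (s : S), g * MulAut.conj s * g⁻¹ = MulAut.conj (g s) := by
    intro g s
    ext x
    simp [MulAut.conj_apply, mul_assoc, map_mul]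
  haveI hNorm : I.Normal := by
    constructor
    intro x hx g
    obtain ⟨s, rfl⟩ := hx
    exact ⟨g s, (hcc g s).symm⟩
  have htP : t ∈ P := ⟨by simpa using I.one_mem, ht⟩
  -- basic positivity
  have mpos : 0 < m := by
    haveI : Nonempty {s : S // t s = s ∧ ¬ p ∣ orderOf s} :=
      ⟨⟨1, map_one t, by simpa using hp.one_lt.ne'⟩⟩
    exact Nat.card_pos
  have cSpos : 0 < cS := by
    haveI : Nonempty {s : S // t s = s} := ⟨⟨1, map_one t⟩⟩
    exact Nat.card_pos
  have NPpos : 0 < Nat.card ↥P := by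
    haveI : Nonempty ↥P := ⟨⟨t, htP⟩⟩
    exact Nat.card_pos
  have m_le : m ≤ cS := by
    apply Nat.card_le_card_of_injective
      (fun x : {s : S // t s = s ∧ ¬ p ∣ orderOf s} => (⟨x.1, x.2.1⟩ : {s : S // t s = s}))
    intro a b hab
    have : (a : S) = b := by simpa [Subtype.mk.injEq] using hab
    exact Subtype.ext this
  -- main counting facts
  have cardGP : Nat.card G = Nat.card ↥P * Nat.card C := by
    have hconjP : ∀ g : ↥G, ((g : MulAut S) * t * (g : MulAut S)⁻¹) ∈ P := by
      intro g
      refine ⟨?_, ?_⟩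
      · have h1 := hcomm (g : MulAut S) g.2
        rwa [commutatorElement_def] at h1
      · obtain ⟨a, ha⟩ := ht
        refine ⟨a, ?_⟩
        rw [← ha]
        exact orderOf_injective (MulAut.conj ((g : MulAut S))).toMonoidHom
          (MulAut.conj ((g : MulAut S))).injective t
    set C' := C.subgroupOf G with hC'
    have hcard1 : Nat.card G = Nat.card (↥G ⧸ C') * Nat.card C' :=
      Subgroup.card_eq_card_quotient_mul_card_subgroup C'
    have hcard2 : Nat.card C' = Nat.card C :=
      Nat.card_congr (Subgroup.subgroupOfEquivOfLe inf_le_right).toEquiv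
    have hcard3 : Nat.card (↥G ⧸ C') = Nat.card ↥P := by
      refine Nat.card_congr (Equiv.ofBijective ?_ ⟨?_, ?_⟩)
      · refine fun x => Quotient.liftOn' x
          (fun g : ↥G => (⟨(g : MulAut S) * t * (g : MulAut S)⁻¹, hconjP g⟩ : ↥P)) ?_
        intro a b hab
        rw [QuotientGroup.leftRel_apply] at hab
        have h1 : ((a : MulAut S))⁻¹ * b ∈ C := by
          have h2 := Subgroup.mem_subgroupOf.mp hab
          simpa using h2
        have hcen : t * ((a : MulAut S)⁻¹ * b) = ((a : MulAut S)⁻¹ * b) * t :=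
          Subgroup.mem_centralizer_iff.mp (Subgroup.mem_inf.mp h1).1 t rfl
        apply Subtype.ext
        show (a : MulAut S) * t * (a : MulAut S)⁻¹ = (b : MulAut S) * t * (b : MulAut S)⁻¹
        have h3 : ((a : MulAut S)⁻¹ * b) * t * ((a : MulAut S)⁻¹ * b)⁻¹ = t := by
          rw [← hcen]
          group
        calc (a : MulAut S) * t * (a : MulAut S)⁻¹
            = (a : MulAut S) * ((((a : MulAut S)⁻¹ * b) * t * ((a : MulAut S)⁻¹ * b)⁻¹))
              * (a : MulAut S)⁻¹ := by rw [h3]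
          _ = (b : MulAut S) * t * (b : MulAut S)⁻¹ := by group
      · intro x y
        refine Quotient.inductionOn₂' x y ?_
        intro a b hab
        apply Quotient.sound'
        rw [QuotientGroup.leftRel_apply]
        have h1 : (a : MulAut S) * t * (a : MulAut S)⁻¹
            = (b : MulAut S) * t * (b : MulAut S)⁻¹ := congrArg Subtype.val hab
        rw [Subgroup.mem_subgroupOf]
        have hco : ((a⁻¹ * b : ↥G) : MulAut S) = (a : MulAut S)⁻¹ * b := by simp
        rw [hco]
        refine Subgroup.mem_inf.mpr ⟨?_, mul_mem (inv_mem a.2) b.2⟩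
        refine Subgroup.mem_centralizer_iff.mpr ?_
        intro g hg
        rw [Set.mem_singleton_iff] at hg
        rw [hg]
        calc t * ((a : MulAut S)⁻¹ * b)
            = (a : MulAut S)⁻¹ * ((a : MulAut S) * t * (a : MulAut S)⁻¹) * b := by group
          _ = (a : MulAut S)⁻¹ * ((b : MulAut S) * t * (b : MulAut S)⁻¹) * b := by rw [h1]
          _ = ((a : MulAut S)⁻¹ * b) * t := by group
      · rintro ⟨u, huI, hu⟩
        obtain ⟨g, hgG, hgt⟩ := hconj u huI hu
        refine ⟨Quotient.mk'' (⟨g, hgG⟩ : ↥G), ?_⟩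
        apply Subtype.ext
        show g * t * g⁻¹ = u
        rw [← hgt]
        group
    rw [hcard1, hcard2, hcard3]
  have cardSP : Nat.card S = Nat.card ↥P * m := by
    have hrex : ∀ x : ↥I, ∃ s : S, MulAut.conj s = (x : MulAut S) := fun x => x.2
    set r : ↥I → S := fun x => (hrex x).choose with hr
    have hrspec : ∀ x : ↥I, MulAut.conj (r x) = (x : MulAut S) := fun x => (hrex x).choose_spec
    have horderconj : ∀ c : S, orderOf (MulAut.conj c) = orderOf c := fun c =>
      orderOf_injective (MulAut.conj : S →* MulAut S) hinj c
    have hpprime_mem : ∀ w : MulAut S, w ∈ G → ¬ p ∣ orderOf w → w ∈ I := by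
      intro w hwG hw
      haveI : (I.subgroupOf G).Normal := hNorm.subgroupOf G
      haveI : Finite (↥G ⧸ I.subgroupOf G) := by
        apply Nat.finite_of_card_ne_zero
        rw [← Subgroup.index_eq_card, hk]
        exact (pow_pos hp.pos k).ne'
      set W : ↥G := ⟨w, hwG⟩ with hW
      have h1 : orderOf ((QuotientGroup.mk' (I.subgroupOf G)) W) ∣ orderOf w := by
        have h2 := orderOf_map_dvd (QuotientGroup.mk' (I.subgroupOf G)) W
        rwa [Subgroup.orderOf_mk] at h2
      have h2 : orderOf ((QuotientGroup.mk' (I.subgroupOf G)) W) ∣ p ^ k := by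
        have h3 := orderOf_dvd_natCard ((QuotientGroup.mk' (I.subgroupOf G)) W)
        rwa [← Subgroup.index_eq_card, hk] at h3
      obtain ⟨j, hjk, hj⟩ := (Nat.dvd_prime_pow hp).mp h2
      have hj0 : j = 0 := by
        by_contra hj0
        exact hw (dvd_trans (hj ▸ dvd_pow_self p hj0) h1)
      have h4 : (QuotientGroup.mk' (I.subgroupOf G)) W = 1 := by
        rw [← orderOf_eq_one_iff, hj, hj0, pow_zero]
      rw [QuotientGroup.mk'_apply, QuotientGroup.eq_one_iff] at h4
      exact Subgroup.mem_subgroupOf.mp h4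
    set F : MulAut S → Set S := fun v => {c | v c = c ∧ ¬ p ∣ orderOf c} with hF
    have cardF : ∀ v : ↥P, Nat.card ↥(F v.1) = m := by
      intro v
      obtain ⟨g, hgG, hgt⟩ := hconj v.1 v.2.1 v.2.2
      have hvg : (v : MulAut S) = g * t * g⁻¹ := by rw [← hgt]; group
      have hmap : ∀ c : ↥(F v.1), t (g⁻¹ c.1) = g⁻¹ c.1 ∧ ¬ p ∣ orderOf ((g⁻¹ : MulAut S) c.1) := by
        intro c
        constructor
        · rw [← hgt]
          show ((g⁻¹ * (v : MulAut S)) * g) ((g⁻¹ : MulAut S) c.1) = (g⁻¹ : MulAut S) c.1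
          rw [MulAut.mul_apply, MulAut.mul_apply]
          rw [MulAut.apply_inv_self]
          rw [c.2.1]
        · have ho : orderOf ((g⁻¹ : MulAut S) c.1) = orderOf c.1 := by
            have h5 := orderOf_injective ((g⁻¹ : MulAut S) : S ≃* S).toMonoidHom
              (MulEquiv.injective _) c.1
            simpa using h5
          rw [ho]
          exact c.2.2
      refine Nat.card_congr (Equiv.ofBijective (fun c : ↥(F v.1) =>
        (⟨(g⁻¹ : MulAut S) c.1, hmap c⟩ : {s : S // t s = s ∧ ¬ p ∣ orderOf s})) ⟨?_, ?_⟩)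
      · intro a b hab
        have h1 : (g⁻¹ : MulAut S) a.1 = (g⁻¹ : MulAut S) b.1 := by
          simpa [Subtype.mk.injEq] using hab
        exact Subtype.ext ((g⁻¹ : MulAut S).injective h1)
      · intro x
        have hmem : g x.1 ∈ F v.1 := by
          constructor
          · show (v : MulAut S) (g x.1) = g x.1
            rw [hvg, MulAut.mul_apply, MulAut.mul_apply, MulAut.inv_apply_self, x.2.1]
          · have ho : orderOf ((g : MulAut S) x.1) = orderOf x.1 := by
              have h5 := orderOf_injective ((g : MulAut S) : S ≃* S).toMonoidHom
                (MulEquiv.injective _) x.1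
              simpa using h5
            rw [ho]
            exact x.2.2
        refine ⟨⟨g x.1, hmem⟩, ?_⟩
        apply Subtype.ext
        show (g⁻¹ : MulAut S) (g x.1) = x.1
        rw [MulAut.inv_apply_self]
    -- the decomposition bijection
    have hbmem : ∀ (v : ↥P) (c : ↥(F (v : MulAut S))),
        (v : MulAut S) * MulAut.conj c.1 * t⁻¹ ∈ I := by
      intro v c
      have h1 : (v : MulAut S) * MulAut.conj c.1 * t⁻¹
          = ((v : MulAut S) * t⁻¹) * (t * MulAut.conj c.1 * t⁻¹) := by group
      rw [h1]
      exact mul_mem v.2.1 (by rw [hcc t c.1]; exact ⟨t c.1, rfl⟩)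
    set bwd : (Σ v : ↥P, ↥(F (v : MulAut S))) → S :=
      fun x => r ⟨(x.1 : MulAut S) * MulAut.conj x.2.1 * t⁻¹, hbmem x.1 x.2⟩ with hbwd
    have hbwdspec : ∀ x : (Σ v : ↥P, ↥(F (v : MulAut S))),
        MulAut.conj (bwd x) = (x.1 : MulAut S) * MulAut.conj x.2.1 * t⁻¹ :=
      fun x => hrspec _
    have hcommF : ∀ (v : MulAut S) (c : S), v c = c → Commute v (MulAut.conj c) := by
      intro v c hcv
      have h1 := hcc v c
      rw [hcv] at h1
      show v * MulAut.conj c = MulAut.conj c * v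
      have h2 : v * MulAut.conj c * v⁻¹ * v = MulAut.conj c * v := congrArg (fun z => z * v) h1
      rwa [inv_mul_cancel_right] at h2
    have hbij : Function.Bijective bwd := by
      constructor
      · rintro ⟨⟨v, hvP⟩, ⟨c, hcF⟩⟩ ⟨⟨v', hvP'⟩, ⟨c', hcF'⟩⟩ heq
        have h1 : v * MulAut.conj c * t⁻¹ = v' * MulAut.conj c' * t⁻¹ := by
          rw [← hbwdspec ⟨⟨v, hvP⟩, ⟨c, hcF⟩⟩, ← hbwdspec ⟨⟨v', hvP'⟩, ⟨c', hcF'⟩⟩, heq]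
        have h2 : v' * MulAut.conj c' = v * MulAut.conj c := (mul_right_cancel h1).symm
        obtain ⟨hvv, hcc'⟩ := pp_unique hp rfl (hcommF v c hcF.1) hvP.2
          (by rw [horderconj]; exact hcF.2) h2 (hcommF v' c' hcF'.1) hvP'.2
          (by rw [horderconj]; exact hcF'.2)
        have hc2 : c = c' := hinj hcc'
        subst hvv
        subst hc2
        rfl
      · intro s
        set u := MulAut.conj s * t with hu
        have huG : u ∈ G := mul_mem (hInn ⟨s, rfl⟩) htG
        obtain ⟨v, w, hvw, hcm, hv, hw, hvz, hwz⟩ := pp_exists hp u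
        have hvG : v ∈ G := (Subgroup.zpowers_le.mpr huG) hvz
        have hwG : w ∈ G := (Subgroup.zpowers_le.mpr huG) hwz
        have hwI : w ∈ I := hpprime_mem w hwG hw
        have h0 : v = MulAut.conj s * t * w⁻¹ := by
          rw [← hu, ← hvw]
          group
        have hvP : v ∈ P := by
          refine ⟨?_, hv⟩
          have h1 : v * t⁻¹ = MulAut.conj s * (t * w⁻¹ * t⁻¹) := by
            rw [h0]
            group
          rw [h1]
          exact mul_mem (⟨s, rfl⟩ : MulAut.conj s ∈ I) (hNorm.conj_mem _ (inv_mem hwI) t)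
        obtain ⟨c, hc⟩ := hwI
        have hvc : v c = c := by
          apply hinj
          have h1 := hcc v c
          rw [hc] at h1
          rw [← h1, hcm.eq, mul_inv_cancel_right]
          exact hc.symm
        have hcF : c ∈ F v := ⟨hvc, by rw [← horderconj c, hc]; exact hw⟩
        refine ⟨⟨⟨v, hvP⟩, ⟨c, hcF⟩⟩, ?_⟩
        apply hinj
        rw [hbwdspec ⟨⟨v, hvP⟩, ⟨c, hcF⟩⟩]
        show v * MulAut.conj c * t⁻¹ = MulAut.conj s
        rw [hc, hvw, hu]
        group
    have hcardsig : Nat.card S = Nat.card (Σ v : ↥P, ↥(F (v : MulAut S))) :=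
      (Nat.card_congr (Equiv.ofBijective bwd hbij)).symm
    haveI : Fintype ↥P := Fintype.ofFinite _
    haveI : ∀ v : ↥P, Fintype ↥(F (v : MulAut S)) := fun v => Fintype.ofFinite _
    have hsum : Nat.card (Σ v : ↥P, ↥(F (v : MulAut S))) = ∑ v : ↥P, Nat.card ↥(F (v : MulAut S)) := by
      rw [Nat.card_eq_fintype_card, Fintype.card_sigma]
      exact Finset.sum_congr rfl (fun v _ => (Nat.card_eq_fintype_card).symm)
    rw [hcardsig, hsum, Finset.sum_congr rfl (fun v _ => cardF v), Finset.sum_const,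
      smul_eq_mul, Finset.card_univ, ← Nat.card_eq_fintype_card]
  have cardI : Nat.card I = Nat.card S := by
    refine (Nat.card_congr (Equiv.ofBijective
      (fun s : S => (⟨MulAut.conj s, ⟨s, rfl⟩⟩ : ↥I)) ⟨?_, ?_⟩)).symm
    · intro a b hab
      exact hinj (congrArg Subtype.val hab)
    · rintro ⟨x, s, rfl⟩
      exact ⟨s, rfl⟩
  have cardGS : Nat.card G = Nat.card S * p ^ k := by
    have h1 := Subgroup.card_mul_index (I.subgroupOf G)
    have h2 : Nat.card (I.subgroupOf G) = Nat.card I :=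
      Nat.card_congr (Subgroup.subgroupOfEquivOfLe hInn).toEquiv
    rw [hk, h2, cardI] at h1
    exact h1.symm
  have cardIC : Nat.card ↥(I ⊓ C) = cS := by
    have hmem : ∀ x : {s : S // t s = s}, MulAut.conj x.1 ∈ I ⊓ C := by
      intro x
      refine Subgroup.mem_inf.mpr ⟨⟨x.1, rfl⟩, Subgroup.mem_inf.mpr ⟨?_, hInn ⟨x.1, rfl⟩⟩⟩
      refine Subgroup.mem_centralizer_iff.mpr ?_
      intro g hg
      rw [Set.mem_singleton_iff] at hg
      rw [hg]
      have h1 := hcc t x.1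
      rw [x.2] at h1
      exact mul_inv_eq_iff_eq_mul.mp h1
    refine (Nat.card_congr (Equiv.ofBijective
      (fun x : {s : S // t s = s} => (⟨MulAut.conj x.1, hmem x⟩ : ↥(I ⊓ C))) ⟨?_, ?_⟩)).symm
    · intro a b hab
      exact Subtype.ext (hinj (by simpa [Subtype.mk.injEq] using hab))
    · rintro ⟨y, hy⟩
      rw [Subgroup.mem_inf] at hy
      obtain ⟨⟨s, rfl⟩, hyC⟩ := hy
      have hcen : t * MulAut.conj s = MulAut.conj s * t :=
        Subgroup.mem_centralizer_iff.mp (Subgroup.mem_inf.mp hyC).1 t rfl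
      have hts : t s = s := by
        apply hinj
        rw [← hcc t s, hcen]
        group
      exact ⟨⟨s, hts⟩, rfl⟩
  obtain ⟨d, hd, cardC⟩ :
      ∃ d : ℕ, I.relIndex C = p ^ d ∧ Nat.card C = cS * p ^ d := by
    have hCG : C ≤ G := inf_le_right
    set f : ↥C →* (↥G ⧸ I.subgroupOf G) :=
      (QuotientGroup.mk' (I.subgroupOf G)).comp (Subgroup.inclusion hCG) with hf
    have hker : f.ker = I.subgroupOf C := by
      ext x
      simp only [hf, MonoidHom.mem_ker, MonoidHom.comp_apply, QuotientGroup.mk'_apply,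
        QuotientGroup.eq_one_iff, Subgroup.mem_subgroupOf, Subgroup.coe_inclusion]
    have hrel : I.relIndex C = Nat.card f.range := by
      rw [Subgroup.relIndex, ← hker, Subgroup.index_ker]
    have hdvd : Nat.card f.range ∣ p ^ k := by
      have h1 : Nat.card f.range ∣ Nat.card (↥G ⧸ I.subgroupOf G) :=
        Subgroup.card_subgroup_dvd_card f.range
      rwa [← Subgroup.index_eq_card, hk] at h1
    obtain ⟨d, _, hd⟩ := (Nat.dvd_prime_pow hp).mp (hrel ▸ hrel ▸ hdvd)
    refine ⟨d, hrel.trans hd, ?_⟩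
    have h3 := Subgroup.card_mul_index (I.subgroupOf C)
    have h4 : Nat.card (I.subgroupOf C) = Nat.card ↥(I ⊓ C) := by
      have e1 : (I ⊓ C).subgroupOf C = I.subgroupOf C := Subgroup.inf_subgroupOf_right I C
      rw [← e1]
      exact Nat.card_congr (Subgroup.subgroupOfEquivOfLe inf_le_right).toEquiv
    have h5 : (I.subgroupOf C).index = I.relIndex C := rfl
    rw [h4, h5, cardIC, hrel.trans hd] at h3
    exact h3.symm
  have cardProd : Nat.card ↥((I : Set (MulAut S)) * (C : Set (MulAut S))) * cS
      = Nat.card S * Nat.card C := by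
    have hset : ((I : Set (MulAut S)) * (C : Set (MulAut S)))
        = ((I ⊔ C : Subgroup (MulAut S)) : Set (MulAut S)) := (@Subgroup.normal_mul _ _ I C hNorm).symm
    have hXcard : Nat.card ↥((I : Set (MulAut S)) * (C : Set (MulAut S)))
        = Nat.card (I ⊔ C : Subgroup (MulAut S)) := Nat.card_congr (Equiv.setCongr hset)
    have h5 := Subgroup.card_mul_index (I.subgroupOf (I ⊔ C))
    have h6 : Nat.card (I.subgroupOf (I ⊔ C)) = Nat.card S := by
      rw [← cardI]
      exact Nat.card_congr (Subgroup.subgroupOfEquivOfLe le_sup_left).toEquiv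
    have h7 : (I.subgroupOf (I ⊔ C)).index = I.relIndex C := by
      have := @Subgroup.relIndex_sup_left _ _ C I hNorm
      rwa [Subgroup.relIndex] at this
    rw [h6, h7, hd] at h5
    rw [hXcard, ← h5, cardC]
    ring
  -- arithmetic endgame
  have hcG : Nat.card C = m * p ^ k := by
    have h1 : Nat.card ↥P * Nat.card C = Nat.card ↥P * (m * p ^ k) := by
      rw [← cardGP, cardGS, cardSP]; ring
    exact Nat.eq_of_mul_eq_mul_left NPpos h1
  have hdk : d ≤ k := by
    have h1 : cS * p ^ d = m * p ^ k := by rw [← cardC, hcG]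
    have h2 : m * p ^ d ≤ m * p ^ k := by
      calc m * p ^ d ≤ cS * p ^ d := Nat.mul_le_mul_right _ m_le
        _ = m * p ^ k := h1
    have h3 : p ^ d ≤ p ^ k := Nat.le_of_mul_le_mul_left h2 mpos
    exact (Nat.pow_le_pow_iff_right hp.one_lt).mp h3
  have hcSm : cS = m * p ^ (k - d) := by
    have h1 : cS * p ^ d = m * p ^ k := by rw [← cardC, hcG]
    have h2 : m * p ^ k = m * p ^ (k - d) * p ^ d := by
      rw [mul_assoc, ← pow_add]
      congr 2
      omega
    rw [h2] at h1
    exact Nat.eq_of_mul_eq_mul_right (pow_pos hp.pos d) h1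
  have hdiv : cS / m = p ^ (k - d) := by
    rw [hcSm, Nat.mul_div_cancel_left _ mpos]
  refine ⟨?_, ⟨k - d, hdiv⟩⟩
  have hX : Nat.card ↥((I : Set (MulAut S)) * (C : Set (MulAut S)))
      = Nat.card ↥P * (m * p ^ d) := by
    have h1 : Nat.card ↥((I : Set (MulAut S)) * (C : Set (MulAut S))) * cS
        = (Nat.card ↥P * (m * p ^ d)) * cS := by
      rw [cardProd, cardSP, cardC, hcSm]; ring
    exact Nat.eq_of_mul_eq_mul_right cSpos h1
  have hpk : p ^ k = p ^ (k - d) * p ^ d := by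
    rw [← pow_add]
    congr 1
    omega
  rw [hdiv, hX, cardGP, hcG, hpk]
  ring
end

section
/- Every finite metacyclic p-group with p an odd prime is powerful. -/
/-!
The subgroup `Pᵖ` is normal and `P ⧸ Pᵖ` has exponent dividing `p`. Metacyclicity passes to
quotients, and a metacyclic group of exponent dividing `p` has order dividing `p ^ 2`, being an
extension of one cyclic group of order dividing `p` by another. Groups of order dividing `p ^ 2`
are abelian, so `[P, P] ≤ Pᵖ`.
-/

open Subgroup

theorem IsCyclic.card_dvd_of_forall_pow_eq_one {G : Type*} [Group G] [IsCyclic G] {n : ℕ}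
    (h : ∀ g : G, g ^ n = 1) : Nat.card G ∣ n :=
  IsCyclic.exponent_eq_card (α := G) ▸ Monoid.exponent_dvd_of_forall_pow_eq_one h

def IsMetacyclic (G : Type*) [Group G] : Prop :=
  ∃ (C : Subgroup G) (_ : C.Normal), IsCyclic C ∧ IsCyclic (G ⧸ C)

namespace IsMetacyclic

variable {G H : Type*} [Group G] [Group H]

theorem of_surjective (hG : IsMetacyclic G) {f : G →* H} (hf : Function.Surjective f) :
    IsMetacyclic H := by
  obtain ⟨C, _, hC, hGC⟩ := hG
  have hCf : IsCyclic (C.map f) := isCyclic_of_surjective _ (f.subgroupMap_surjective C)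
  have : (C.map f).Normal := Subgroup.Normal.map ‹_› f hf
  exact ⟨C.map f, inferInstance, hCf, isCyclic_of_surjective _ <|
    QuotientGroup.map_surjective_of_surjective _ _ f ((QuotientGroup.mk'_surjective _).comp hf)
      (le_comap_map f C)⟩

theorem card_dvd_sq_of_forall_pow_eq_one (hG : IsMetacyclic G) {n : ℕ}
    (h : ∀ g : G, g ^ n = 1) : Nat.card G ∣ n ^ 2 := by
  obtain ⟨C, _, hC, hGC⟩ := hG
  have hCn : Nat.card C ∣ n :=
    IsCyclic.card_dvd_of_forall_pow_eq_one fun c ↦ Subtype.ext (by simpa using h c)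
  have hGCn : Nat.card (G ⧸ C) ∣ n := IsCyclic.card_dvd_of_forall_pow_eq_one fun q ↦ by
    induction q using QuotientGroup.induction_on with
    | H g => rw [← QuotientGroup.mk_pow, h g, QuotientGroup.mk_one]
  rw [C.card_eq_card_quotient_mul_card_subgroup, sq]
  exact mul_dvd_mul hGCn hCn

end IsMetacyclic

theorem isMulCommutative_of_card_dvd_prime_sq {G : Type*} [Group G] {p : ℕ} [hp : Fact p.Prime]
    (h : Nat.card G ∣ p ^ 2) : IsMulCommutative G := by
  obtain ⟨k, hk, hGk⟩ := (Nat.dvd_prime_pow hp.out).1 h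
  obtain rfl | hk1 : k = 2 ∨ k ≤ 1 := by omega
  · exact IsPGroup.isMulCommutative_of_card_eq_prime_sq hGk
  · have : IsCyclic G := isCyclic_of_card_dvd_prime (p := p)
      (hGk ▸ pow_dvd_pow p hk1 |>.trans (pow_one p).dvd)
    infer_instance

instance Subgroup.closure_pow_normal {G : Type*} [Group G] {n : ℕ} :
    (closure {y : G | ∃ x : G, y = x ^ n}).Normal := by
  suffices h : {y : G | ∃ x : G, y = x ^ n} = Group.conjugatesOfSet {y | ∃ x : G, y = x ^ n} by
    rw [h]
    exact normalClosure_normal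
  refine Set.Subset.antisymm Group.subset_conjugatesOfSet fun a ha ↦ ?_
  obtain ⟨_, ⟨x, rfl⟩, hconj⟩ := Group.mem_conjugatesOfSet_iff.1 ha
  obtain ⟨c, rfl⟩ := isConj_iff.1 hconj
  exact ⟨c * x * c⁻¹, (conj_pow).symm⟩

theorem QuotientGroup.pow_eq_one_of_closure_pow {G : Type*} [Group G] {n : ℕ}
    (q : G ⧸ closure {y : G | ∃ x : G, y = x ^ n}) : q ^ n = 1 := by
  induction q using QuotientGroup.induction_on with
  | H g => rw [← QuotientGroup.mk_pow, QuotientGroup.eq_one_iff]; exact subset_closure ⟨g, rfl⟩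

theorem stmt16_general {P : Type*} [Group P] (p : ℕ) [Fact p.Prime]
    (C : Subgroup P) [C.Normal] (hC : IsCyclic C) (hquot : IsCyclic (P ⧸ C)) :
    ⁅(⊤ : Subgroup P), (⊤ : Subgroup P)⁆ ≤
      Subgroup.closure {y : P | ∃ x : P, y = x ^ p} := by
  have hmeta : IsMetacyclic (P ⧸ closure {y : P | ∃ x : P, y = x ^ p}) :=
    IsMetacyclic.of_surjective ⟨C, inferInstance, hC, hquot⟩ (QuotientGroup.mk'_surjective _)
  have hcomm := isMulCommutative_of_card_dvd_prime_sq
    (hmeta.card_dvd_sq_of_forall_pow_eq_one QuotientGroup.pow_eq_one_of_closure_pow)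
  exact Subgroup.Normal.quotient_commutative_iff_commutator_le.mp hcomm

/-- Every finite metacyclic `p`-group with `p` odd is powerful: if `P` has a
cyclic normal subgroup `C` with cyclic quotient, then `[P,P] ≤ Pᵖ`. -/
theorem stmt16 {P : Type*} [Group P] [Fintype P] (p : ℕ) [Fact p.Prime]
    (hodd : Odd p) (hP : IsPGroup p P)
    (C : Subgroup P) [C.Normal] (hC : IsCyclic C) (hquot : IsCyclic (P ⧸ C)) :
    ⁅(⊤ : Subgroup P), (⊤ : Subgroup P)⁆ ≤
      Subgroup.closure {y : P | ∃ x : P, y = x ^ p} :=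
  stmt16_general p C hC hquot
end

section
/- Let G be a profinite group, p a prime, and P a p-Sylow subgroup of G. Suppose that for every open normal subgroup N of G and every t ∈ P, the coset (N ∩ P)t contains a p-element not conjugate to t in G. Then G has at least 2^{ℵ₀} conjugacy classes of p-elements. -/
/-- A (generalized) `p`-element of a profinite group: an element that
topologically generates a finite `p`-group or a copy of `ℤ_p`; equivalently,
its image in every quotient by an open normal subgroup has `p`-power order. -/
def IsProPElement {G : Type*} [Group G] [TopologicalSpace G] (p : ℕ) (x : G) : Prop :=
  ∀ (N : Subgroup G) [N.Normal], IsOpen (N : Set G) →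
    ∃ k : ℕ, orderOf ((x : G) : G ⧸ N) = p ^ k

/-- A `p`-Sylow subgroup of a profinite group: a maximal closed subgroup all of
whose elements are `p`-elements. -/
structure IsProPSylow {G : Type*} [Group G] [TopologicalSpace G] (p : ℕ)
    (P : Subgroup G) : Prop where
  isClosed : IsClosed (P : Set G)
  pelem : ∀ x ∈ P, IsProPElement p x
  maximal : ∀ Q : Subgroup G, IsClosed (Q : Set G) →
    (∀ x ∈ Q, IsProPElement p x) → P ≤ Q → Q = P

section Stmt17Aux

lemma stmt17_inf_normal {G : Type*} [Group G] {N M : Subgroup G}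
    (hN : N.Normal) (hM : M.Normal) : (N ⊓ M).Normal := by
  constructor
  intro a ha g
  rw [Subgroup.mem_inf] at ha ⊢
  exact ⟨hN.conj_mem a ha.1 g, hM.conj_mem a ha.2 g⟩

variable {G : Type*} [Group G] [TopologicalSpace G] [IsTopologicalGroup G]
  [CompactSpace G] [T2Space G] [TotallyDisconnectedSpace G]

/-- Every element `z ≠ 1` is avoided by some open normal subgroup. -/
lemma stmt17_exists_ons_not_mem {z : G} (hz : z ≠ 1) :
    ∃ N : Subgroup G, N.Normal ∧ IsOpen (N : Set G) ∧ z ∉ N := by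
  have h1 : connectedComponent (1 : G) = {1} := connectedComponent_eq_singleton 1
  have h2 := connectedComponent_eq_iInter_isClopen (1 : G)
  have h3 : z ∉ ⋂ s : { s : Set G // IsClopen s ∧ (1 : G) ∈ s }, (s : Set G) := by
    rw [← h2, h1]
    simpa using hz
  rw [Set.mem_iInter] at h3
  push_neg at h3
  obtain ⟨Z, hZ⟩ := h3
  obtain ⟨H, hH⟩ :=
    IsTopologicalGroup.exist_openNormalSubgroup_sub_clopen_nhds_of_one Z.2.1 Z.2.2
  exact ⟨H.toSubgroup, H.isNormal', H.isOpen', fun hmem => hZ (hH hmem)⟩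

/-- Non-conjugate elements can be separated modulo an open normal subgroup. -/
lemma stmt17_sep {x y : G} (hxy : ¬ IsConj x y) :
    ∃ N : Subgroup G, N.Normal ∧ IsOpen (N : Set G) ∧
      ∀ g : G, g * x * g⁻¹ * y⁻¹ ∉ N := by
  by_contra hc
  push_neg at hc
  set ι := {N : Subgroup G // N.Normal ∧ IsOpen (N : Set G)} with hι
  have : Nonempty ι := ⟨⟨⊤, inferInstance, by simp⟩⟩
  set C : ι → Set G := fun N => (fun g : G => g * x * g⁻¹ * y⁻¹) ⁻¹' (N : Set G) with hC
  have hcont : Continuous (fun g : G => g * x * g⁻¹ * y⁻¹) := by fun_prop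
  have hclosed : ∀ N : ι, IsClosed (C N) :=
    fun N => (N.1.isClosed_of_isOpen N.2.2).preimage hcont
  have hne : ∀ N : ι, (C N).Nonempty := fun N => hc N.1 N.2.1 N.2.2
  have hdir : Directed (· ⊇ ·) C := by
    intro N M
    refine ⟨⟨N.1 ⊓ M.1, stmt17_inf_normal N.2.1 M.2.1, ?_⟩, ?_, ?_⟩
    · rw [Subgroup.coe_inf]; exact N.2.2.inter M.2.2
    · intro g hg; exact (Subgroup.mem_inf.mp hg).1
    · intro g hg; exact (Subgroup.mem_inf.mp hg).2
  obtain ⟨g, hg⟩ := IsCompact.nonempty_iInter_of_directed_nonempty_isCompact_isClosed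
    C hdir hne (fun N => (hclosed N).isCompact) hclosed
  rw [Set.mem_iInter] at hg
  have h1 : g * x * g⁻¹ * y⁻¹ = 1 := by
    by_contra hne1
    obtain ⟨N, hN, hNo, hzN⟩ := stmt17_exists_ons_not_mem hne1
    exact hzN (hg ⟨N, hN, hNo⟩)
  exact hxy (isConj_iff.mpr ⟨g, by rwa [mul_inv_eq_one] at h1⟩)

end Stmt17Aux

/-- A node of the binary tree used in the proof of `stmt17`. -/
structure Stmt17Node {G : Type*} [Group G] [TopologicalSpace G] (P : Subgroup G) where
  t : G
  N : Subgroup G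
  ht : t ∈ P
  hN : N.Normal
  hNo : IsOpen (N : Set G)

section Stmt17Tree

variable {G : Type*} [Group G] [TopologicalSpace G] [IsTopologicalGroup G]
  [CompactSpace G] [T2Space G] [TotallyDisconnectedSpace G]
  (p : ℕ) (P : Subgroup G)
  (h : ∀ (N : Subgroup G), N.Normal → IsOpen (N : Set G) → ∀ t ∈ P,
      ∃ n ∈ N ⊓ P, IsProPElement p (n * t) ∧ ¬ IsConj (n * t) t)

include h

lemma stmt17_children_exist (nd : Stmt17Node P) :
    ∃ c : Bool → Stmt17Node P,
      (∀ b, (c b).N ≤ nd.N) ∧ (∀ b, (c b).t * nd.t⁻¹ ∈ nd.N) ∧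
      ((c true).N = (c false).N) ∧
      (∀ g : G, g * (c false).t * g⁻¹ * ((c true).t)⁻¹ ∉ (c false).N) := by
  obtain ⟨n, hn, -, hnc⟩ := h nd.N nd.hN nd.hNo nd.t nd.ht
  obtain ⟨hnN, hnP⟩ := Subgroup.mem_inf.mp hn
  have hxy : ¬ IsConj nd.t (n * nd.t) := fun hc => hnc hc.symm
  obtain ⟨M, hM, hMo, hMsep⟩ := stmt17_sep hxy
  have hNMnormal : (nd.N ⊓ M).Normal := stmt17_inf_normal nd.hN hM
  have hNMopen : IsOpen ((nd.N ⊓ M : Subgroup G) : Set G) := by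
    rw [Subgroup.coe_inf]; exact nd.hNo.inter hMo
  refine ⟨fun b => match b with
    | false => ⟨nd.t, nd.N ⊓ M, nd.ht, hNMnormal, hNMopen⟩
    | true => ⟨n * nd.t, nd.N ⊓ M, P.mul_mem hnP nd.ht, hNMnormal, hNMopen⟩,
    ?_, ?_, rfl, ?_⟩
  · rintro (b | b) <;> exact inf_le_left
  · rintro (b | b)
    · simpa using nd.N.one_mem
    · simpa using hnN
  · intro g hg
    exact hMsep g (Subgroup.mem_inf.mp hg).2

/-- The chosen pair of children of a node. -/
noncomputable def stmt17Children (nd : Stmt17Node P) : Bool → Stmt17Node P :=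
  Classical.choose (stmt17_children_exist p P h nd)

lemma stmt17Children_spec (nd : Stmt17Node P) :
    (∀ b, ((stmt17Children p P h nd) b).N ≤ nd.N) ∧
      (∀ b, ((stmt17Children p P h nd) b).t * nd.t⁻¹ ∈ nd.N) ∧
      (((stmt17Children p P h nd) true).N = ((stmt17Children p P h nd) false).N) ∧
      (∀ g : G, g * ((stmt17Children p P h nd) false).t * g⁻¹ *
        (((stmt17Children p P h nd) true).t)⁻¹ ∉ ((stmt17Children p P h nd) false).N) :=
  Classical.choose_spec (stmt17_children_exist p P h nd)

/-- The binary tree of nodes. -/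
noncomputable def stmt17Tree (hP1 : (1 : G) ∈ P) : List Bool → Stmt17Node P
  | [] => ⟨1, ⊤, hP1, inferInstance, by simp⟩
  | b :: s => stmt17Children p P h (stmt17Tree hP1 s) b

end Stmt17Tree

/-- Lemma 2.3: let `G` be a profinite group, `p` a prime and `P` a `p`-Sylow
subgroup of `G`.  If each coset `(N ∩ P)t` with `N` open normal and `t ∈ P`
contains a `p`-element not conjugate to `t` in `G`, then `G` has at least
`2^ℵ₀` conjugacy classes of `p`-elements. -/
theorem stmt17 {G : Type*} [Group G] [TopologicalSpace G] [IsTopologicalGroup G]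
    [CompactSpace G] [T2Space G] [TotallyDisconnectedSpace G]
    (p : ℕ) [Fact p.Prime] (P : Subgroup G) (hP : IsProPSylow p P)
    (h : ∀ (N : Subgroup G), N.Normal → IsOpen (N : Set G) → ∀ t ∈ P,
      ∃ n ∈ N ⊓ P, IsProPElement p (n * t) ∧ ¬ IsConj (n * t) t) :
    2 ^ Cardinal.aleph0 ≤
      Cardinal.mk {c : ConjClasses G // ∃ x : G, IsProPElement p x ∧
        ConjClasses.mk x = c} := by
  classical
  set node : List Bool → Stmt17Node P := stmt17Tree p P h P.one_mem with hnode
  -- prefixes of a branch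
  let pre : (ℕ → Bool) → ℕ → List Bool := fun σ n => Nat.rec [] (fun m ih => σ m :: ih) n
  have pre_succ : ∀ σ n, pre σ (n + 1) = σ n :: pre σ n := fun _ _ => rfl
  have node_cons : ∀ b s, node (b :: s) = stmt17Children p P h (node s) b := fun _ _ => rfl
  -- the nested closed sets along a branch
  set C : (ℕ → Bool) → ℕ → Set G := fun σ n =>
    {g : G | g * (node (pre σ n)).t⁻¹ ∈ (node (pre σ n)).N} ∩ P with hCdef
  have hCclosed : ∀ σ n, IsClosed (C σ n) := by
    intro σ n
    refine IsClosed.inter ?_ hP.isClosed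
    exact ((node (pre σ n)).N.isClosed_of_isOpen (node (pre σ n)).hNo).preimage
      (by fun_prop)
  have hCne : ∀ σ n, (C σ n).Nonempty := by
    intro σ n
    exact ⟨(node (pre σ n)).t, by simpa using (node (pre σ n)).N.one_mem,
      (node (pre σ n)).ht⟩
  have hCanti : ∀ σ n, C σ (n + 1) ⊆ C σ n := by
    intro σ n g hg
    obtain ⟨hle, hcoset, -, -⟩ := stmt17Children_spec p P h (node (pre σ n))
    have hg1 : g * (node (pre σ (n + 1))).t⁻¹ ∈ (node (pre σ (n + 1))).N := hg.1
    rw [pre_succ, node_cons] at hg1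
    refine ⟨?_, hg.2⟩
    show g * (node (pre σ n)).t⁻¹ ∈ (node (pre σ n)).N
    have h1 : g * ((stmt17Children p P h (node (pre σ n))) (σ n)).t⁻¹ ∈ (node (pre σ n)).N :=
      hle (σ n) hg1
    have h2 := (node (pre σ n)).N.mul_mem h1 (hcoset (σ n))
    have : g * ((stmt17Children p P h (node (pre σ n))) (σ n)).t⁻¹ *
        (((stmt17Children p P h (node (pre σ n))) (σ n)).t * (node (pre σ n)).t⁻¹) =
        g * (node (pre σ n)).t⁻¹ := by group
    rwa [this] at h2
  -- pick a point in the intersection along each branch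
  have hxex : ∀ σ : ℕ → Bool, ∃ x : G, ∀ n, x ∈ C σ n := by
    intro σ
    obtain ⟨x, hx⟩ := IsCompact.nonempty_iInter_of_sequence_nonempty_isCompact_isClosed
      (C σ) (hCanti σ) (hCne σ) ((hCclosed σ 0).isCompact) (hCclosed σ)
    exact ⟨x, by simpa [Set.mem_iInter] using hx⟩
  choose x hx using hxex
  have hxP : ∀ σ, x σ ∈ P := fun σ => (hx σ 0).2
  -- prefixes agree when the branches agree
  have pre_eq : ∀ (σ τ : ℕ → Bool) (n : ℕ), (∀ m < n, σ m = τ m) → pre σ n = pre τ n := by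
    intro σ τ n
    induction n with
    | zero => intro _; rfl
    | succ m ih =>
      intro hm
      rw [pre_succ, pre_succ, hm m (Nat.lt_succ_self m),
        ih (fun k hk => hm k (Nat.lt_succ_of_lt hk))]
  -- key non-conjugacy
  have main : ∀ (σ τ : ℕ → Bool) (n : ℕ), (∀ m < n, σ m = τ m) →
      σ n = false → τ n = true → ¬ IsConj (x σ) (x τ) := by
    intro σ τ n hm hσn hτn hconj
    obtain ⟨g, hg⟩ := isConj_iff.mp hconj
    have hpre := pre_eq σ τ n hm
    set nd := node (pre σ n) with hnd
    obtain ⟨-, -, hNeq, hsep⟩ := stmt17Children_spec p P h nd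
    set c := stmt17Children p P h nd with hc
    have hxσ : x σ * ((c false).t)⁻¹ ∈ (c false).N := by
      have h0 : x σ * (node (pre σ (n + 1))).t⁻¹ ∈ (node (pre σ (n + 1))).N := (hx σ (n + 1)).1
      rwa [pre_succ, node_cons, ← hnd, ← hc, hσn] at h0
    have hxτ : x τ * ((c true).t)⁻¹ ∈ (c false).N := by
      have h0 : x τ * (node (pre τ (n + 1))).t⁻¹ ∈ (node (pre τ (n + 1))).N := (hx τ (n + 1)).1
      rw [pre_succ, node_cons, hτn, ← hpre, ← hnd, ← hc] at h0
      rwa [hNeq] at h0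
    have hkey : g * (c false).t * g⁻¹ * ((c true).t)⁻¹ ∈ (c false).N := by
      have heq : g * (c false).t * g⁻¹ * ((c true).t)⁻¹ =
          (g * (x σ * ((c false).t)⁻¹)⁻¹ * g⁻¹) * ((g * x σ * g⁻¹) * ((c true).t)⁻¹) := by
        group
      rw [heq, hg]
      exact (c false).N.mul_mem
        ((stmt17Children_spec p P h nd).2.2.1 ▸
          ((show ((c false).N).Normal from (c false).hN).conj_mem _
            (((c false).N).inv_mem hxσ) g))
        hxτ
    exact hsep g hkey
  -- the injection
  set F : (ℕ → Bool) → {c : ConjClasses G // ∃ x : G, IsProPElement p x ∧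
      ConjClasses.mk x = c} :=
    fun σ => ⟨ConjClasses.mk (x σ), x σ, hP.pelem _ (hxP σ), rfl⟩ with hF
  have hFinj : Function.Injective F := by
    intro σ τ hστ
    by_contra hne
    have hconj : IsConj (x σ) (x τ) := by
      have : ConjClasses.mk (x σ) = ConjClasses.mk (x τ) := congrArg Subtype.val hστ
      exact ConjClasses.mk_eq_mk_iff_isConj.mp this
    have hex : ∃ n, σ n ≠ τ n := by
      by_contra hall
      push_neg at hall
      exact hne (funext hall)
    set n := Nat.find hex with hn
    have hmin : ∀ m < n, σ m = τ m := fun m hm => by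
      by_contra hcon
      exact absurd hm (not_lt.mpr (Nat.find_le hcon))
    have hdiff : σ n ≠ τ n := Nat.find_spec hex
    cases hσn : σ n with
    | false =>
      have hτn : τ n = true := by
        cases hτ : τ n
        · exact absurd (hσn.trans hτ.symm) hdiff
        · rfl
      exact main σ τ n hmin hσn hτn hconj
    | true =>
      have hτn : τ n = false := by
        cases hτ : τ n
        · rfl
        · exact absurd (hσn.trans hτ.symm) hdiff
      exact main τ σ n (fun m hm => (hmin m hm).symm) hτn hσn hconj.symm
  -- cardinality
  have h1 : Cardinal.mk (ℕ → Bool) = 2 ^ Cardinal.aleph0 := by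
    simp [Cardinal.mk_arrow]
  have h2 := Cardinal.lift_mk_le'.mpr ⟨⟨F, hFinj⟩⟩
  rw [h1] at h2
  simpa using h2
end

section
/- Let A be an infinite procyclic profinite group isomorphic to a Cartesian product of nontrivial procyclic p-groups A_p over an infinite set I of primes. Then two elements of A whose images have distinct infinite supports in the product generate non-isomorphic (as profinite groups) closed subgroups; consequently A has at least 2^{ℵ₀} conjugacy classes of elements of infinite order. -/
open Subgroup

lemma aux_onsub {G : Type*} [Group G] [TopologicalSpace G] [IsTopologicalGroup G]
    [CompactSpace G] [T2Space G] [TotallyDisconnectedSpace G] {W : Set G}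
    (hW : IsOpen W) (h1 : (1 : G) ∈ W) : ∃ H : OpenNormalSubgroup G, (H : Set G) ⊆ W := by
  obtain ⟨V, hV, h1V, hVW⟩ := compact_exists_isClopen_in_isOpen hW h1
  obtain ⟨H, hH⟩ := IsTopologicalGroup.exist_openNormalSubgroup_sub_clopen_nhds_of_one hV h1V
  exact ⟨H, hH.trans hVW⟩

def auxP (p : ℕ) (H : Type*) [Group H] [TopologicalSpace H] : Prop :=
  ∃ N : Subgroup H, N.Normal ∧ IsOpen (N : Set H) ∧ N ≠ ⊤ ∧ ∀ g : H, ∃ k : ℕ, g ^ p ^ k ∈ N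

lemma auxP_transfer {p : ℕ} {H H' : Type*} [Group H] [TopologicalSpace H]
    [Group H'] [TopologicalSpace H'] (hP : auxP p H) (e : H' ≃* H) (he : Continuous e) :
    auxP p H' := by
  obtain ⟨N, hNorm, hOpen, hTop, hPow⟩ := hP
  refine ⟨N.comap e.toMonoidHom, hNorm.comap _, ?_, ?_, ?_⟩
  · rw [Subgroup.coe_comap]
    exact hOpen.preimage he
  · intro hcon
    obtain ⟨h, hh⟩ : ∃ h : H, h ∉ N := by
      by_contra hc; push_neg at hc; exact hTop ((eq_top_iff' N).2 hc)
    have : e.symm h ∈ N.comap e.toMonoidHom := hcon ▸ Subgroup.mem_top _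
    rw [Subgroup.mem_comap] at this
    simp at this
    exact hh this
  · intro g
    obtain ⟨k, hk⟩ := hPow (e g)
    exact ⟨k, by rw [Subgroup.mem_comap, map_pow]; exact hk⟩

-- orderOf in a p-group quotient is coprime to other primes
lemma aux_coprime_order {p r : ℕ} (hp : p.Prime) (hr : r.Prime) (hne : p ≠ r)
    {Q : Type*} [Group Q] (hQ : IsPGroup r Q) (g : Q) : Nat.Coprime p (orderOf g) := by
  obtain ⟨k, hk⟩ := hQ g
  exact ((Nat.coprime_primes hp hr).2 hne).pow_right k |>.coprime_dvd_right
    (orderOf_dvd_of_pow_eq_one hk)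

lemma aux_dvd {p : ℕ} {G : Type*} [Group G] [TopologicalSpace G] [IsTopologicalGroup G]
    [CompactSpace G] [T2Space G] [TotallyDisconnectedSpace G]
    (hpro : ∀ (N : Subgroup G) [N.Normal], IsOpen (N : Set G) → IsPGroup p (G ⧸ N))
    (hp : p.Prime) {g : G} (hg : g ≠ 1) {n : ℕ} (hgn : g ^ n = 1) : p ∣ n := by
  obtain ⟨H, hH⟩ := aux_onsub (isOpen_compl_singleton (x := g)) (by simpa using hg.symm)
  haveI := H.isNormal'
  have hpg : IsPGroup p (G ⧸ H.toSubgroup) := hpro H.toSubgroup H.isOpen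
  set gQ : G ⧸ H.toSubgroup := QuotientGroup.mk g with hgQ
  have hne : gQ ≠ 1 := by
    rw [hgQ, Ne, QuotientGroup.eq_one_iff]
    exact fun hmem => (hH hmem) rfl
  obtain ⟨k, hk⟩ := hpg gQ
  obtain ⟨j, hj, hdj⟩ := (Nat.dvd_prime_pow hp).1 (orderOf_dvd_of_pow_eq_one hk)
  have hj1 : j ≠ 0 := by
    rintro rfl
    simp at hdj
    exact hne hdj
  have hpd : p ∣ orderOf gQ := hdj ▸ dvd_pow_self p hj1
  refine hpd.trans (orderOf_dvd_of_pow_eq_one ?_)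
  rw [hgQ, ← QuotientGroup.mk_pow, hgn, QuotientGroup.mk_one]
lemma aux_core {ι : Type*} (q : ι → ℕ) (hq : ∀ i, (q i).Prime) (hinj : Function.Injective q)
    (A : ι → Type*) [∀ i, Group (A i)] [∀ i, TopologicalSpace (A i)]
    [∀ i, IsTopologicalGroup (A i)] [∀ i, CompactSpace (A i)] [∀ i, T2Space (A i)]
    [∀ i, TotallyDisconnectedSpace (A i)]
    (hpro : ∀ i, ∀ (N : Subgroup (A i)) [N.Normal], IsOpen (N : Set (A i)) →
      IsPGroup (q i) (A i ⧸ N))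
    (y : ∀ i, A i) (i : ι) (hyi : y i = 1) :
    y ∈ _root_.closure ((Subgroup.zpowers (y ^ q i) : Subgroup (∀ i, A i)) : Set (∀ i, A i)) := by
  rw [mem_closure_iff]
  intro o ho hyo
  obtain ⟨I, u, hu, hsub⟩ := isOpen_pi_iff.1 ho y hyo
  have hM : ∀ j : ι, j ∈ I → ∃ H : OpenNormalSubgroup (A j), ∀ c ∈ H, y j * c ∈ u j := by
    intro j hj
    obtain ⟨H, hH⟩ := aux_onsub (W := (fun c => y j * c) ⁻¹' u j)
      ((hu j hj).1.preimage (continuous_mul_left (y j))) (by simpa using (hu j hj).2)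
    exact ⟨H, fun c hc => hH hc⟩
  choose M hMmem using hM
  have hpg : ∀ (j) (hj : j ∈ I), IsPGroup (q j) (A j ⧸ (M j hj).toSubgroup) := by
    intro j hj
    haveI := (M j hj).isNormal'
    exact hpro j _ (M j hj).isOpen
  set d : (j : ι) → j ∈ I → ℕ := fun j hj =>
    orderOf (QuotientGroup.mk (y j) : A j ⧸ (M j hj).toSubgroup) with hd
  have hcop : ∀ (j) (hj : j ∈ I), Nat.Coprime (q i) (d j hj) := by
    intro j hj
    by_cases h1 : y j = 1
    · simp [hd, h1]
    · have hji : j ≠ i := fun h => h1 (h ▸ hyi)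
      exact aux_coprime_order (hq i) (hq j) (fun h => hji (hinj h.symm)) (hpg j hj) _
  set m : ℕ := ∏ j ∈ I.attach, d j j.2 with hm
  have hcopm : Nat.Coprime (q i) m := Nat.Coprime.prod_right fun j _ => hcop j j.2
  obtain ⟨a, b, hab⟩ := Nat.isCoprime_iff_coprime.2 hcopm
  refine ⟨(y ^ q i) ^ a, hsub ?_, SetLike.mem_coe.2 (Subgroup.zpow_mem _ (Subgroup.mem_zpowers _) a)⟩
  rw [Set.mem_pi]
  intro j hj
  have hdm : d j hj ∣ m := Finset.dvd_prod_of_mem _ (Finset.mem_attach I ⟨j, hj⟩)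
  have h1 : ((d j hj : ℤ)) ∣ (q i : ℤ) * a - 1 :=
    dvd_trans (Int.natCast_dvd_natCast.2 hdm) ⟨-b, by linarith⟩
  have h2 : y j ^ ((q i : ℤ) * a - 1) ∈ (M j hj).toSubgroup := by
    have h3 := orderOf_dvd_iff_zpow_eq_one.1 h1
    rwa [← QuotientGroup.mk_zpow, QuotientGroup.eq_one_iff] at h3
  have h4 : ((y ^ q i) ^ a) j = y j * y j ^ ((q i : ℤ) * a - 1) := by
    have : ((y ^ q i) ^ a) j = (y j ^ q i) ^ a := rfl
    rw [this, ← zpow_natCast (y j) (q i), ← zpow_mul]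
    conv_lhs => rw [show (q i : ℤ) * a = 1 + ((q i : ℤ) * a - 1) by ring]
    rw [zpow_add, zpow_one]
  rw [h4]
  exact hMmem j hj _ h2
lemma aux_A {ι : Type*} (q : ι → ℕ)
    (A : ι → Type*) [∀ i, Group (A i)] [∀ i, TopologicalSpace (A i)]
    [∀ i, IsTopologicalGroup (A i)] [∀ i, CompactSpace (A i)] [∀ i, T2Space (A i)]
    [∀ i, TotallyDisconnectedSpace (A i)]
    (hpro : ∀ i, ∀ (N : Subgroup (A i)) [N.Normal], IsOpen (N : Set (A i)) →
      IsPGroup (q i) (A i ⧸ N))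
    (x : ∀ i, A i) (i : ι) (hxi : x i ≠ 1) :
    auxP (q i) ↥((Subgroup.zpowers x).topologicalClosure) := by
  obtain ⟨M, hM⟩ := aux_onsub (isOpen_compl_singleton (x := x i)) (by simpa using hxi.symm)
  haveI := M.isNormal'
  have hpg : IsPGroup (q i) (A i ⧸ M.toSubgroup) := hpro i _ M.isOpen
  set K := (Subgroup.zpowers x).topologicalClosure with hK
  set φ : ↥K →* A i := (Pi.evalMonoidHom A i).comp K.subtype with hφ
  refine ⟨M.toSubgroup.comap φ, Subgroup.Normal.comap inferInstance φ, ?_, ?_, ?_⟩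
  · have : ((M.toSubgroup.comap φ : Subgroup ↥K) : Set ↥K) = φ ⁻¹' M.toSubgroup :=
      Subgroup.coe_comap _ _
    rw [this]
    exact M.isOpen.preimage ((continuous_apply i).comp continuous_subtype_val)
  · intro hcon
    have hxK : x ∈ K := Subgroup.le_topologicalClosure _ (Subgroup.mem_zpowers x)
    have : (⟨x, hxK⟩ : ↥K) ∈ M.toSubgroup.comap φ := hcon ▸ Subgroup.mem_top _
    rw [Subgroup.mem_comap] at this
    exact hM this rfl
  · intro g
    obtain ⟨k, hk⟩ := hpg (QuotientGroup.mk (φ g))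
    refine ⟨k, ?_⟩
    rw [Subgroup.mem_comap, map_pow]
    rwa [← QuotientGroup.mk_pow, QuotientGroup.eq_one_iff] at hk

lemma aux_B {ι : Type*} (q : ι → ℕ) (hq : ∀ i, (q i).Prime) (hinj : Function.Injective q)
    (A : ι → Type*) [∀ i, Group (A i)] [∀ i, TopologicalSpace (A i)]
    [∀ i, IsTopologicalGroup (A i)] [∀ i, CompactSpace (A i)] [∀ i, T2Space (A i)]
    [∀ i, TotallyDisconnectedSpace (A i)]
    (hpro : ∀ i, ∀ (N : Subgroup (A i)) [N.Normal], IsOpen (N : Set (A i)) →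
      IsPGroup (q i) (A i ⧸ N))
    (y : ∀ i, A i) (i : ι) (hyi : y i = 1) :
    ¬ auxP (q i) ↥((Subgroup.zpowers y).topologicalClosure) := by
  intro hP
  set K := (Subgroup.zpowers y).topologicalClosure with hK
  obtain ⟨N, hNorm, hNopen, hNtop, hNpow⟩ := hP
  have hyK : y ∈ K := Subgroup.le_topologicalClosure _ (Subgroup.mem_zpowers y)
  have hKset : (K : Set (∀ i, A i)) = _root_.closure (Subgroup.zpowers y : Set (∀ i, A i)) := rfl
  -- find a q i - th root of y in K
  obtain ⟨z, hzK, hzq⟩ : ∃ z, z ∈ K ∧ z ^ q i = y := by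
    have hKcomp : IsCompact (K : Set (∀ i, A i)) :=
      (Subgroup.isClosed_topologicalClosure (Subgroup.zpowers y)).isCompact
    have hTc : IsClosed ((fun g => g ^ q i) '' (K : Set (∀ i, A i))) :=
      (hKcomp.image (continuous_pow (q i))).isClosed
    have hsub : ((Subgroup.zpowers (y ^ q i) : Subgroup (∀ i, A i)) : Set (∀ i, A i)) ⊆
        (fun g => g ^ q i) '' (K : Set (∀ i, A i)) := by
      rintro w hw
      obtain ⟨n, rfl⟩ := Subgroup.mem_zpowers_iff.1 (SetLike.mem_coe.1 hw)
      refine ⟨y ^ n, K.zpow_mem hyK n, ?_⟩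
      show (y ^ n) ^ q i = (y ^ q i) ^ n
      rw [← zpow_natCast (y ^ n) (q i), ← zpow_mul, ← zpow_natCast y (q i), ← zpow_mul, mul_comm]
    have hyT := closure_minimal hsub hTc (aux_core q hq hinj A hpro y i hyi)
    obtain ⟨z, hz1, hz2⟩ := hyT
    exact ⟨z, hz1, hz2⟩
  set yK : ↥K := ⟨y, hyK⟩ with hyKdef
  set zK : ↥K := ⟨z, hzK⟩ with hzKdef
  have hzqK : zK ^ q i = yK := Subtype.ext (by simpa using hzq)
  haveI := hNorm
  set yQ : ↥K ⧸ N := QuotientGroup.mk yK with hyQ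
  -- every element of the quotient is a power of yQ
  have hgen : ∀ g : ↥K, ∃ n : ℤ, (QuotientGroup.mk g : ↥K ⧸ N) = yQ ^ n := by
    intro g
    have hVopen : IsOpen {h : ↥K | g⁻¹ * h ∈ N} :=
      hNopen.preimage (continuous_mul_left g⁻¹)
    obtain ⟨W, hWopen, hWeq⟩ := isOpen_induced_iff.1 hVopen
    have hgW : (g : ∀ i, A i) ∈ W := by
      have hgV : g ∈ {h : ↥K | g⁻¹ * h ∈ N} := by simp [N.one_mem]
      rw [← hWeq] at hgV; exact hgV
    have hgcl : (g : ∀ i, A i) ∈ _root_.closure (Subgroup.zpowers y : Set (∀ i, A i)) := by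
      rw [← hKset]; exact g.2
    obtain ⟨w, hwW, hwz⟩ := mem_closure_iff.1 hgcl W hWopen hgW
    obtain ⟨n, rfl⟩ := Subgroup.mem_zpowers_iff.1 (SetLike.mem_coe.1 hwz)
    refine ⟨n, ?_⟩
    have hwK : (y ^ n : ∀ i, A i) ∈ K := K.zpow_mem hyK n
    have hmemV : (⟨y ^ n, hwK⟩ : ↥K) ∈ {h : ↥K | g⁻¹ * h ∈ N} := by
      rw [← hWeq]; exact hwW
    have heq : (⟨y ^ n, hwK⟩ : ↥K) = yK ^ n := Subtype.ext (by simp [hyKdef])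
    rw [heq] at hmemV
    have hmk := (QuotientGroup.eq (s := N)).2 hmemV
    rw [hmk, QuotientGroup.mk_zpow]
  obtain ⟨t, ht⟩ := hgen zK
  have hyQeq : yQ = yQ ^ (t * (q i : ℤ)) := by
    have h0 : yQ = (QuotientGroup.mk zK : ↥K ⧸ N) ^ (q i : ℤ) := by
      rw [hyQ, ← hzqK, QuotientGroup.mk_pow, zpow_natCast]
    conv_lhs => rw [h0, ht]
    rw [← zpow_mul]
  have h1 : yQ ^ (t * (q i : ℤ) - 1) = 1 := by
    rw [zpow_sub, zpow_one, ← hyQeq, mul_inv_cancel]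
  obtain ⟨k, hk⟩ := hNpow yK
  have hk' : yQ ^ q i ^ k = 1 := by
    rw [hyQ, ← QuotientGroup.mk_pow, QuotientGroup.eq_one_iff]; exact hk
  obtain ⟨j, hj, hdj⟩ := (Nat.dvd_prime_pow (hq i)).1 (orderOf_dvd_of_pow_eq_one hk')
  have hyQ1 : yQ = 1 := by
    rcases Nat.eq_zero_or_pos j with rfl | hjpos
    · simp at hdj
      exact hdj
    · exfalso
      have hqd : (q i : ℤ) ∣ (orderOf yQ : ℤ) := by
        exact_mod_cast hdj ▸ dvd_pow_self (q i) hjpos.ne'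
      have hdvd1 : (q i : ℤ) ∣ t * (q i : ℤ) - 1 :=
        hqd.trans (orderOf_dvd_iff_zpow_eq_one.2 h1)
      have hone : (q i : ℤ) ∣ 1 := by
        have h2 : (q i : ℤ) ∣ t * (q i : ℤ) := ⟨t, mul_comm _ _⟩
        simpa using dvd_sub h2 hdvd1
      have hle := Int.le_of_dvd one_pos hone
      have := (hq i).two_le
      omega
  apply hNtop
  rw [eq_top_iff']
  intro g
  obtain ⟨n, hn⟩ := hgen g
  rw [← QuotientGroup.eq_one_iff (N := N) g, hn, hyQ1, one_zpow]
lemma aux_comm {G : Type*} [Group G] [TopologicalSpace G] [IsTopologicalGroup G] [T2Space G]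
    {g : G} (hg : (Subgroup.zpowers g).topologicalClosure = ⊤) (a b : G) : a * b = b * a := by
  have huniv : ∀ c : G, c ∈ _root_.closure (Subgroup.zpowers g : Set G) := by
    intro c
    have : c ∈ (Subgroup.zpowers g).topologicalClosure := hg ▸ Subgroup.mem_top c
    exact this
  have step1 : ∀ s ∈ (Subgroup.zpowers g : Set G), ∀ c : G, s * c = c * s := by
    intro s hs c
    obtain ⟨n, rfl⟩ := Subgroup.mem_zpowers_iff.1 (SetLike.mem_coe.1 hs)
    have hcl : IsClosed {d : G | g ^ n * d = d * g ^ n} :=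
      isClosed_eq (continuous_const.mul continuous_id) (continuous_id.mul continuous_const)
    have hsub : (Subgroup.zpowers g : Set G) ⊆ {d : G | g ^ n * d = d * g ^ n} := by
      rintro w hw
      obtain ⟨m, rfl⟩ := Subgroup.mem_zpowers_iff.1 (SetLike.mem_coe.1 hw)
      show g ^ n * g ^ m = g ^ m * g ^ n
      rw [← zpow_add, ← zpow_add, add_comm]
    exact closure_minimal hsub hcl (huniv c)
  have hcl : IsClosed {d : G | d * b = b * d} :=
    isClosed_eq (continuous_id.mul continuous_const) (continuous_const.mul continuous_id)
  have hsub : (Subgroup.zpowers g : Set G) ⊆ {d | d * b = b * d} := fun s hs => step1 s hs b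
  exact closure_minimal hsub hcl (huniv a)

lemma aux_gen_ne_one {G : Type*} [Group G] [TopologicalSpace G] [IsTopologicalGroup G] [T1Space G] [Nontrivial G]
    {g : G} (hg : (Subgroup.zpowers g).topologicalClosure = ⊤) : g ≠ 1 := by
  rintro rfl
  have hbot : (Subgroup.zpowers (1 : G)).topologicalClosure = ⊥ := by
    rw [Subgroup.zpowers_one_eq_bot]
    refine le_antisymm (Subgroup.topologicalClosure_minimal _ le_rfl ?_)
      (Subgroup.le_topologicalClosure _)
    rw [Subgroup.coe_bot]
    exact isClosed_singleton
  obtain ⟨a, ha⟩ := exists_ne (1 : G)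
  have : a ∈ (⊥ : Subgroup G) := by rw [← hbot, hg]; exact Subgroup.mem_top a
  exact ha (Subgroup.mem_bot.1 this)
/-- Elements of a Cartesian product of nontrivial procyclic pro-`p` groups over
an infinite set of primes whose supports are distinct infinite sets generate
non-isomorphic closed (procyclic) subgroups; consequently the product has at
least `2^ℵ₀` conjugacy classes of elements of infinite order. -/
theorem stmt19 {ι : Type*} [Infinite ι] (q : ι → ℕ)
    (hq : ∀ i, (q i).Prime) (hinj : Function.Injective q)
    (A : ι → Type*) [∀ i, Group (A i)] [∀ i, TopologicalSpace (A i)]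
    [∀ i, IsTopologicalGroup (A i)] [∀ i, CompactSpace (A i)]
    [∀ i, T2Space (A i)] [∀ i, TotallyDisconnectedSpace (A i)]
    [∀ i, Nontrivial (A i)]
    (hcyc : ∀ i, ∃ g : A i, (Subgroup.zpowers g).topologicalClosure = ⊤)
    (hpro : ∀ i, ∀ (N : Subgroup (A i)) [N.Normal], IsOpen (N : Set (A i)) →
      IsPGroup (q i) (A i ⧸ N)) :
    (∀ x y : ∀ i, A i,
      {i | x i ≠ 1}.Infinite → {i | y i ≠ 1}.Infinite →
      {i | x i ≠ 1} ≠ {i | y i ≠ 1} →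
      ¬ ∃ e : ↥((Subgroup.zpowers x).topologicalClosure) ≃*
          ↥((Subgroup.zpowers y).topologicalClosure),
        Continuous e ∧ Continuous e.symm) ∧
    2 ^ Cardinal.aleph0 ≤
      Cardinal.mk {c : ConjClasses (∀ i, A i) // ∃ x : ∀ i, A i,
        ¬ IsOfFinOrder x ∧ ConjClasses.mk x = c} := by
  classical
  constructor
  · intro x y hxinf hyinf hne hiso
    obtain ⟨e, he, hesymm⟩ := hiso
    have hcase : (∃ i, x i ≠ 1 ∧ y i = 1) ∨ (∃ i, x i = 1 ∧ y i ≠ 1) := by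
      by_contra hc
      push_neg at hc
      obtain ⟨h1, h2⟩ := hc
      apply hne
      ext i
      simp only [Set.mem_setOf_eq]
      constructor
      · exact fun hxi => h1 i hxi
      · exact fun hyi hxx => hyi (h2 i hxx)
    rcases hcase with ⟨i, hxi, hyi⟩ | ⟨i, hxi, hyi⟩
    · exact aux_B q hq hinj A hpro y i hyi
        (auxP_transfer (aux_A q A hpro x i hxi) e.symm hesymm)
    · exact aux_B q hq hinj A hpro x i hxi
        (auxP_transfer (aux_A q A hpro y i hyi) e he)
  · choose g hg using hcyc
    have hgne : ∀ i, g i ≠ 1 := fun i => aux_gen_ne_one (hg i)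
    set f := Infinite.natEmbedding ι with hf
    set B : Set (ULift ℕ) → Set ℕ :=
      fun T => {m | m % 2 = 1 ∨ (m % 2 = 0 ∧ ULift.up (m / 2) ∈ T)} with hB
    set S : Set (ULift ℕ) → Set ι := fun T => f '' B T with hS
    set X : Set (ULift ℕ) → (∀ i, A i) :=
      fun T => fun i => if i ∈ S T then g i else 1 with hX
    have hsupp : ∀ T i, X T i ≠ 1 ↔ i ∈ S T := by
      intro T i
      by_cases h : i ∈ S T <;> simp [hX, h, hgne i]
    have hSinf : ∀ T, (S T).Infinite := by
      intro T
      refine Set.Infinite.image f.injective.injOn ?_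
      refine Set.Infinite.mono (s := {m : ℕ | m % 2 = 1}) ?_ ?_
      · intro m hm
        simp only [Set.mem_setOf_eq] at hm
        exact Or.inl hm
      · exact Set.infinite_of_injective_forall_mem (f := fun n : ℕ => 2 * n + 1)
          (fun a b hab => by simp only [] at hab; omega) (fun a => by simp only [Set.mem_setOf_eq]; omega)
    have hord : ∀ T, ¬ IsOfFinOrder (X T) := by
      intro T hfin
      obtain ⟨n, hnpos, hn⟩ := isOfFinOrder_iff_pow_eq_one.1 hfin
      have hdvd : ∀ i ∈ S T, q i ∣ n := by
        intro i hi
        refine aux_dvd (hpro i) (hq i) ((hsupp T i).2 hi) (n := n) ?_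
        have := congrFun hn i
        simpa using this
      have hsubfin : S T ⊆ q ⁻¹' ↑(n.primeFactors) := by
        intro i hi
        simp only [Set.mem_preimage, Finset.coe_sort_coe, Finset.mem_coe,
          Nat.mem_primeFactors]
        exact ⟨hq i, hdvd i hi, hnpos.ne'⟩
      exact hSinf T ((Set.Finite.preimage hinj.injOn (n.primeFactors.finite_toSet)).subset hsubfin)
    have hcomm : ∀ a b : (∀ i, A i), a * b = b * a := by
      intro a b
      funext i
      exact aux_comm (hg i) (a i) (b i)
    have hXinj : Function.Injective X := by
      intro T T' hTT'
      have hSeq : S T = S T' := by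
        ext i
        rw [← hsupp T i, ← hsupp T' i, hTT']
      have hBeq : B T = B T' := by
        have := Set.image_injective.2 f.injective (hS ▸ hSeq)
        exact this
      ext n
      have hmem : ∀ T0 : Set (ULift ℕ), n ∈ T0 ↔ 2 * n.down ∈ B T0 := by
        intro T0
        simp only [hB, Set.mem_setOf_eq, Nat.mul_mod_right, Nat.mul_div_cancel_left _ two_pos,
          ULift.up_down]
        norm_num
      rw [hmem T, hmem T', hBeq]
    set F : Set (ULift ℕ) → {c : ConjClasses (∀ i, A i) // ∃ x : ∀ i, A i,
        ¬ IsOfFinOrder x ∧ ConjClasses.mk x = c} :=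
      fun T => ⟨ConjClasses.mk (X T), X T, hord T, rfl⟩ with hF
    have hFinj : Function.Injective F := by
      intro T T' hTT'
      have h1 : ConjClasses.mk (X T) = ConjClasses.mk (X T') := congrArg Subtype.val hTT'
      obtain ⟨c, hc⟩ := isConj_iff.1 (ConjClasses.mk_eq_mk_iff_isConj.1 h1)
      have hXeq : X T = X T' := by
        rw [← hc, hcomm c (X T), mul_assoc, mul_inv_cancel, mul_one]
      exact hXinj hXeq
    calc 2 ^ Cardinal.aleph0 = Cardinal.mk (Set (ULift ℕ)) := by
          rw [Cardinal.mk_set, Cardinal.mk_denumerable]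
      _ ≤ _ := Cardinal.mk_le_of_injective hFinj
end
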